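/- arXiv:1401.8266 — 12 statements merged into one kernel-verified Lean document; each statement's English description precedes it below -/
import Mathlib

section
/- Let (q̃_n)_{n≥0} be a sequence of positive reals with q̃_0 = 1 and q̃_{n+1} ≥ 2·q̃_n for all n. Then there exists a real number x whose continued fraction convergents p_n/q_n satisfy (1/2)·q̃_n ≤ q_n ≤ q̃_n for all n. -/
/-!
Choose the partial quotients greedily: once `q_{n-1} ≤ q_n ≤ q̃_n` are known, take for `a_{n+1}` the
largest integer with `q_{n+1} = a_{n+1} q_n + q_{n-1} ≤ q̃_{n+1}`. Since `q̃_{n+1} ≥ 2 q̃_n ≥ q_n + q_{n-1}`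
this gives `a_{n+1} ≥ 1`, and maximality gives `q_{n+1} > q̃_{n+1} - q_n ≥ q̃_{n+1} - q̃_n ≥ q̃_{n+1} / 2`.
Every sequence of partial quotients `a_{n+1} ≥ 1` is realised by a real number: a point in the
intersection of the nested compact sets `[a_0; a_1, …, a_{m-1}, [a_m, a_m + 1]]`.
-/

open GenContFract Set

namespace GenContFract

theorem dens_eq_of_s_get?_eq {K : Type*} [DivisionRing K] {g : GenContFract K} {b : ℕ → K}
    {s : ℕ → K × K} (hg : ∀ n, g.s.get? n = some ⟨1, b n⟩) (hs₀ : s 0 = (0, 1))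
    (hs : ∀ n, s (n + 1) = ((s n).2, b n * (s n).2 + (s n).1)) (n : ℕ) :
    g.dens n = (s n).2 := by
  suffices ∀ n, g.dens n = (s n).2 ∧ g.dens (n + 1) = (s (n + 1)).2 from (this n).1
  intro n
  induction n with
  | zero => simp [zeroth_den_eq_one, first_den_eq (hg 0), hs, hs₀]
  | succ n ih =>
    refine ⟨ih.2, ?_⟩
    rw [dens_recurrence (hg (n + 1)) ih.1 ih.2, hs (n + 1), hs n]
    simp

theorem IntFractPair.stream_eq_some_of_fract_eq_inv {K : Type*} [Field K] [LinearOrder K]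
    [FloorRing K] {X : ℕ → K} (hfr : ∀ n, Int.fract (X n) = (X (n + 1))⁻¹)
    (hne : ∀ n, X (n + 1) ≠ 0) (n : ℕ) :
    IntFractPair.stream (X 0) n = some (IntFractPair.of (X n)) := by
  induction n with
  | zero => rfl
  | succ n ih =>
    have hfr_ne : (IntFractPair.of (X n)).fr ≠ 0 := by
      simpa [IntFractPair.of, hfr n] using hne n
    rw [IntFractPair.stream_succ_of_some ih hfr_ne]
    simp [IntFractPair.of, hfr n]

end GenContFract

/-- `cfCylinder a m n` is the set of values of `[a n; a (n+1), …, a (n+m-1), t]` for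
`t ∈ [a (n+m), a (n+m) + 1]`. -/
def cfCylinder (a : ℕ → ℤ) : ℕ → ℕ → Set ℝ
  | 0, n => Icc (a n : ℝ) (a n + 1)
  | m + 1, n => (fun t : ℝ => a n + t⁻¹) '' cfCylinder a m (n + 1)

theorem cfCylinder_nonempty (a : ℕ → ℤ) : ∀ m n, (cfCylinder a m n).Nonempty
  | 0, n => nonempty_Icc.2 (by linarith)
  | m + 1, n => (cfCylinder_nonempty a m (n + 1)).image _

section cfCylinder

variable {a : ℕ → ℤ}

theorem cfCylinder_subset_Icc (ha : ∀ n, 1 ≤ a (n + 1)) :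
    ∀ m n, cfCylinder a m n ⊆ Icc (a n : ℝ) (a n + 1)
  | 0, _ => subset_rfl
  | m + 1, n => by
    rintro _ ⟨t, ht, rfl⟩
    have ht₁ : (1 : ℝ) ≤ t :=
      le_trans (by exact_mod_cast ha n) (cfCylinder_subset_Icc ha m (n + 1) ht).1
    exact ⟨le_add_of_nonneg_right (inv_nonneg.2 (by linarith)),
      add_le_add_right (inv_le_one_of_one_le₀ ht₁) _⟩

theorem one_le_of_mem_cfCylinder (ha : ∀ n, 1 ≤ a (n + 1)) {m n : ℕ} {t : ℝ}
    (ht : t ∈ cfCylinder a m (n + 1)) : 1 ≤ t :=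
  le_trans (by exact_mod_cast ha n) (cfCylinder_subset_Icc ha m (n + 1) ht).1

theorem cfCylinder_succ_subset (ha : ∀ n, 1 ≤ a (n + 1)) :
    ∀ m n, cfCylinder a (m + 1) n ⊆ cfCylinder a m n
  | 0, n => cfCylinder_subset_Icc ha 1 n
  | m + 1, n => image_mono (cfCylinder_succ_subset ha m (n + 1))

theorem isCompact_cfCylinder (ha : ∀ n, 1 ≤ a (n + 1)) :
    ∀ m n, IsCompact (cfCylinder a m n)
  | 0, _ => isCompact_Icc
  | m + 1, n => (isCompact_cfCylinder ha m (n + 1)).image_of_continuousOn <|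
      continuousOn_const.add <| continuousOn_id.inv₀ fun _ ht =>
        (zero_lt_one.trans_le (one_le_of_mem_cfCylinder ha ht)).ne'

theorem exists_seq_mem_Icc_eq_add_inv (ha : ∀ n, 1 ≤ a (n + 1)) :
    ∃ X : ℕ → ℝ, ∀ n, X n ∈ Icc (a n : ℝ) (a n + 1) ∧ X n = a n + (X (n + 1))⁻¹ := by
  obtain ⟨x, hx⟩ := IsCompact.nonempty_iInter_of_sequence_nonempty_isCompact_isClosed
    (fun m => cfCylinder a m 0) (fun m => cfCylinder_succ_subset ha m 0)
    (fun m => cfCylinder_nonempty a m 0) (isCompact_cfCylinder ha 0 0)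
    (fun m => (isCompact_cfCylinder ha m 0).isClosed)
  let X : ℕ → ℝ := fun n => Nat.rec x (fun n y => (y - a n)⁻¹) n
  have hX : ∀ n, X n = a n + (X (n + 1))⁻¹ := fun n => by simp [X]
  have hmem : ∀ n m, X n ∈ cfCylinder a m n := by
    intro n
    induction n with
    | zero => exact mem_iInter.1 hx
    | succ n ih =>
      intro m
      obtain ⟨t, ht, hxt⟩ := ih (m + 1)
      have : X (n + 1) = t := inv_injective (by linarith [hX n])
      exact this ▸ ht
  exact ⟨X, fun n => ⟨hmem n 0, hX n⟩⟩

end cfCylinder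

theorem exists_real_with_prescribed_partDens (a : ℕ → ℤ) (ha : ∀ n, 1 ≤ a (n + 1)) :
    ∃ x : ℝ, ∀ n, (GenContFract.of x).s.get? n = some ⟨1, a (n + 1)⟩ := by
  obtain ⟨X, hX⟩ := exists_seq_mem_Icc_eq_add_inv ha
  have h_one_lt : ∀ n, 1 < X (n + 1) := fun n => by
    have : (1 : ℝ) ≤ a (n + 1) := by exact_mod_cast ha n
    have : (1 : ℝ) ≤ a (n + 2) := by exact_mod_cast ha (n + 1)
    have : 0 < (X (n + 2))⁻¹ := inv_pos.2 (by linarith [(hX (n + 2)).1.1])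
    linarith [hX (n + 1)]
  have hfloor : ∀ n, ⌊X n⌋ = a n := fun n =>
    Int.floor_eq_iff.2 ⟨(hX n).1.1, by linarith [hX n, inv_lt_one_of_one_lt₀ (h_one_lt n)]⟩
  have hfr : ∀ n, Int.fract (X n) = (X (n + 1))⁻¹ := fun n => by
    rw [Int.fract, hfloor]; linarith [hX n]
  refine ⟨X 0, fun n => ?_⟩
  rw [get?_of_eq_some_of_succ_get?_intFractPair_stream
    (IntFractPair.stream_eq_some_of_fract_eq_inv hfr (fun n => (zero_lt_one.trans (h_one_lt n)).ne')
      (n + 1))]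
  simp [IntFractPair.of, hfloor]

section Greedy

noncomputable def greedyQuot (Q : ℝ) (s : ℝ × ℝ) : ℤ := ⌊(Q - s.1) / s.2⌋

/-- `greedyDenPair qq n = (q_{n-1}, q_n)`. -/
noncomputable def greedyDenPair (qq : ℕ → ℝ) : ℕ → ℝ × ℝ
  | 0 => (0, 1)
  | n + 1 => ((greedyDenPair qq n).2,
      greedyQuot (qq (n + 1)) (greedyDenPair qq n) * (greedyDenPair qq n).2
        + (greedyDenPair qq n).1)

theorem greedyQuot_spec {Q : ℝ} {s : ℝ × ℝ} (hs : s.1 ≤ s.2) (hs₀ : 0 < s.2) (hQ : 2 * s.2 ≤ Q) :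
    1 ≤ greedyQuot Q s ∧ Q - s.2 < greedyQuot Q s * s.2 + s.1 ∧
      greedyQuot Q s * s.2 + s.1 ≤ Q := by
  have hdiv : (Q - s.1) / s.2 * s.2 = Q - s.1 := div_mul_cancel₀ _ hs₀.ne'
  unfold greedyQuot
  refine ⟨Int.le_floor.2 ?_, ?_, ?_⟩
  · rw [Int.cast_one, le_div_iff₀ hs₀]; linarith
  · nlinarith [Int.sub_one_lt_floor ((Q - s.1) / s.2)]
  · nlinarith [Int.floor_le ((Q - s.1) / s.2)]

variable {qq : ℕ → ℝ}

theorem greedyDenPair_bounds (h0 : qq 0 = 1) (hgrow : ∀ n, 2 * qq n ≤ qq (n + 1)) (n : ℕ) :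
    0 ≤ (greedyDenPair qq n).1 ∧ (greedyDenPair qq n).1 ≤ (greedyDenPair qq n).2 ∧
      0 < (greedyDenPair qq n).2 ∧ qq n / 2 ≤ (greedyDenPair qq n).2 ∧
      (greedyDenPair qq n).2 ≤ qq n := by
  induction n with
  | zero => norm_num [greedyDenPair, h0]
  | succ n ih =>
    obtain ⟨hp, hpq, hq, -, hqQ⟩ := ih
    obtain ⟨h1, hlo, hup⟩ := greedyQuot_spec (Q := qq (n + 1)) hpq hq (by linarith [hgrow n])
    have h1' : (1 : ℝ) ≤ greedyQuot (qq (n + 1)) (greedyDenPair qq n) := by exact_mod_cast h1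
    simp only [greedyDenPair]
    refine ⟨hq.le, by nlinarith, by nlinarith, by linarith [hgrow n], hup⟩

theorem one_le_greedyQuot (h0 : qq 0 = 1) (hgrow : ∀ n, 2 * qq n ≤ qq (n + 1)) (n : ℕ) :
    1 ≤ greedyQuot (qq (n + 1)) (greedyDenPair qq n) := by
  obtain ⟨-, hpq, hq, -, hqQ⟩ := greedyDenPair_bounds h0 hgrow n
  exact (greedyQuot_spec (Q := qq (n + 1)) hpq hq (by linarith [hgrow n])).1

end Greedy

theorem exists_real_with_prescribed_cf_denominators_general (qq : ℕ → ℝ)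
    (h0 : qq 0 = 1) (hgrow : ∀ n, 2 * qq n ≤ qq (n + 1)) :
    ∃ x : ℝ, ∀ n : ℕ,
      (1 / 2) * qq n ≤ (GenContFract.of x).dens n ∧ (GenContFract.of x).dens n ≤ qq n := by
  obtain ⟨x, hx⟩ := exists_real_with_prescribed_partDens
    (Stream'.cons 0 fun n => greedyQuot (qq (n + 1)) (greedyDenPair qq n))
    (one_le_greedyQuot h0 hgrow)
  refine ⟨x, fun n => ?_⟩
  rw [dens_eq_of_s_get?_eq (s := greedyDenPair qq) hx rfl (fun n => rfl) n]
  obtain ⟨-, -, -, hlo, hup⟩ := greedyDenPair_bounds h0 hgrow n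
  constructor <;> linarith

/-- Given a sequence of positive reals with `qq 0 = 1` and `qq (n+1) ≥ 2 * qq n`, there is a
real number `x` whose continued fraction denominators `q n` satisfy
`(1/2) * qq n ≤ q n ≤ qq n` for all `n`. -/
theorem exists_real_with_prescribed_cf_denominators (qq : ℕ → ℝ)
    (hpos : ∀ n, 0 < qq n) (h0 : qq 0 = 1) (hgrow : ∀ n, 2 * qq n ≤ qq (n + 1)) :
    ∃ x : ℝ, ∀ n : ℕ,
      (1 / 2) * qq n ≤ (GenContFract.of x).dens n ∧ (GenContFract.of x).dens n ≤ qq n :=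
  exists_real_with_prescribed_cf_denominators_general qq h0 hgrow
end

section
/- Let x ∈ ℝ have continued fraction convergents (p_n/q_n)_{n=0}^{N}. Then there is a constant c > 0 (independent of x) such that for every rational p/q there exists n with q ≥ c·q_n and |x - p/q| ≥ c·|x - p_n/q_n|. -/
open GenContFract

/-- The auxiliary continuants of the continued fraction of a real number are integers. -/
lemma contsAux_int_of_real (x : ℝ) : ∀ n : ℕ,
    ((∃ a : ℤ, ((GenContFract.of x).contsAux n).a = (a : ℝ)) ∧
     (∃ b : ℤ, ((GenContFract.of x).contsAux n).b = (b : ℝ))) ∧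
    ((∃ a : ℤ, ((GenContFract.of x).contsAux (n + 1)).a = (a : ℝ)) ∧
     (∃ b : ℤ, ((GenContFract.of x).contsAux (n + 1)).b = (b : ℝ))) := by
  intro n
  induction n with
  | zero =>
    constructor
    · exact ⟨⟨1, by rw [GenContFract.zeroth_contAux_eq_one_zero]; norm_num⟩,
        ⟨0, by rw [GenContFract.zeroth_contAux_eq_one_zero]; norm_num⟩⟩
    · exact ⟨⟨⌊x⌋, by rw [GenContFract.first_contAux_eq_h_one, GenContFract.of_h_eq_floor]⟩,
        ⟨1, by rw [GenContFract.first_contAux_eq_h_one]; norm_num⟩⟩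
  | succ n ih =>
    obtain ⟨⟨⟨pa, hpa⟩, ⟨pb, hpb⟩⟩, ⟨⟨ca, hca⟩, ⟨cb, hcb⟩⟩⟩ := ih
    refine ⟨⟨⟨ca, hca⟩, ⟨cb, hcb⟩⟩, ?_⟩
    cases hs : (GenContFract.of x).s.get? n with
    | none =>
      have hstep : (GenContFract.of x).contsAux (n + 2) = (GenContFract.of x).contsAux (n + 1) :=
        GenContFract.contsAux_stable_step_of_terminated hs
      rw [hstep]
      exact ⟨⟨ca, hca⟩, ⟨cb, hcb⟩⟩
    | some gp =>
      obtain ⟨ha1, z, hz⟩ := GenContFract.of_partNum_eq_one_and_exists_int_partDen_eq hs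
      have hrec := GenContFract.contsAux_recurrence hs rfl rfl
      rw [hrec]
      constructor
      · exact ⟨z * ca + pa, by simp [hz, ha1, hca, hpa]⟩
      · exact ⟨z * cb + pb, by simp [hz, ha1, hcb, hpb]⟩

/-- There is an absolute constant `c > 0` such that for every real `x` and every rational
`p/q`, some convergent `pₙ/qₙ` of the continued fraction expansion of `x` satisfies
`q ≥ c * qₙ` and `|x - p/q| ≥ c * |x - pₙ/qₙ|`. -/
theorem convergents_are_best_approximations_up_to_constant :
    ∃ c : ℝ, 0 < c ∧ ∀ x : ℝ, ∀ p : ℤ, ∀ q : ℕ, 0 < q →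
      ∃ n : ℕ, c * (GenContFract.of x).dens n ≤ (q : ℝ) ∧
        c * |x - (GenContFract.of x).convs n| ≤ |x - (p : ℝ) / (q : ℝ)| := by
  classical
  refine ⟨1/2, by norm_num, ?_⟩
  intro x p q hq
  have hq1 : (1 : ℝ) ≤ (q : ℝ) := by exact_mod_cast hq
  have hq0 : (0 : ℝ) < (q : ℝ) := by linarith
  -- all denominators are at least 1
  have hdens1 : ∀ n, (1 : ℝ) ≤ (GenContFract.of x).dens n := by
    intro n
    induction n with
    | zero => rw [GenContFract.zeroth_den_eq_one]
    | succ n ih => exact le_trans ih GenContFract.of_den_mono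
  -- there is an index where we can stop
  have hex : ∃ n, (GenContFract.of x).TerminatedAt n ∨
      (GenContFract.of x).convs n = (p : ℝ) / (q : ℝ) ∨
      (2 * q : ℝ) ≤ (GenContFract.of x).dens (n + 1) := by
    by_cases hterm : ∃ n, (GenContFract.of x).TerminatedAt n
    · obtain ⟨n, hn⟩ := hterm; exact ⟨n, Or.inl hn⟩
    · push_neg at hterm
      refine ⟨2 * q + 1, Or.inr (Or.inr ?_)⟩
      have h1 : ¬(GenContFract.of x).TerminatedAt (2 * q + 2 - 1) := hterm _
      have h2 : (Nat.fib (2 * q + 2 + 1) : ℝ) ≤ (GenContFract.of x).dens (2 * q + 2) :=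
        GenContFract.succ_nth_fib_le_of_nth_den (Or.inr h1)
      have hfib : (2 * q : ℕ) ≤ Nat.fib (2 * q + 2 + 1) := by
        have := Nat.le_fib_add_one (2 * q + 2 + 1)
        omega
      calc (2 * (q : ℝ)) ≤ (Nat.fib (2 * q + 2 + 1) : ℝ) := by exact_mod_cast hfib
        _ ≤ (GenContFract.of x).dens (2 * q + 2) := h2
  set m := Nat.find hex with hmdef
  have hm := Nat.find_spec hex
  refine ⟨m, ?_, ?_⟩
  · -- (1/2) * dens m ≤ q
    have hdm : ((GenContFract.of x).dens m : ℝ) ≤ 2 * q := by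
      rcases Nat.eq_zero_or_eq_succ_pred m with h0 | hsucc
      · rw [h0, GenContFract.zeroth_den_eq_one]; linarith
      · have hk : m - 1 < m := by omega
        have := Nat.find_min hex hk
        push_neg at this
        have h3 := this.2.2
        rw [show m - 1 + 1 = m by omega] at h3
        linarith
    linarith
  · -- (1/2) * |x - convs m| ≤ |x - p/q|
    by_cases hT : (GenContFract.of x).TerminatedAt m
    · have hxc : x = (GenContFract.of x).convs m :=
        GenContFract.of_correctness_of_terminatedAt hT
      rw [← hxc]
      simp
    · by_cases hE : (GenContFract.of x).convs m = (p : ℝ) / (q : ℝ)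
      · rw [hE]
        have := abs_nonneg (x - (p : ℝ) / (q : ℝ))
        linarith
      · have h3 : (2 * q : ℝ) ≤ (GenContFract.of x).dens (m + 1) := by
          rcases hm with h | h | h
          · exact absurd h hT
          · exact absurd h hE
          · exact h
        have habs : |x - (GenContFract.of x).convs m| ≤
            1 / ((GenContFract.of x).dens m * (GenContFract.of x).dens (m + 1)) :=
          GenContFract.abs_sub_convs_le hT
        -- numerator and denominator are integers
        obtain ⟨⟨-, -⟩, ⟨A, hA⟩, ⟨B, hB⟩⟩ := contsAux_int_of_real x m
        have hnum : (GenContFract.of x).nums m = (A : ℝ) := by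
          rw [GenContFract.num_eq_conts_a, GenContFract.nth_cont_eq_succ_nth_contAux]; exact hA
        have hden : (GenContFract.of x).dens m = (B : ℝ) := by
          rw [GenContFract.den_eq_conts_b, GenContFract.nth_cont_eq_succ_nth_contAux]; exact hB
        have hB1 : (1 : ℝ) ≤ (B : ℝ) := by rw [← hden]; exact hdens1 m
        have hB0 : (0 : ℝ) < (B : ℝ) := by linarith
        have hconv : (GenContFract.of x).convs m = (A : ℝ) / (B : ℝ) := by
          rw [GenContFract.conv_eq_num_div_den, hnum, hden]
        -- separation between convergent and p/q
        have hint : A * (q : ℤ) ≠ p * B := by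
          intro hcontra
          apply hE
          rw [hconv, div_eq_div_iff (ne_of_gt hB0) (ne_of_gt hq0)]
          exact_mod_cast hcontra
        have h1int : (1 : ℝ) ≤ |(A : ℝ) * q - (B : ℝ) * p| := by
          have h2 : (1 : ℤ) ≤ |A * (q : ℤ) - B * p| := by
            have : A * (q : ℤ) - B * p ≠ 0 := by
              intro h; apply hint; linarith [sub_eq_zero.mp h]
            exact Int.one_le_abs this
          exact_mod_cast h2
        have hsep : 1 / ((B : ℝ) * q) ≤ |(A : ℝ) / B - (p : ℝ) / q| := by
          rw [div_sub_div _ _ (ne_of_gt hB0) (ne_of_gt hq0), abs_div,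
            abs_of_pos (mul_pos hB0 hq0)]
          gcongr
        set D : ℝ := (B : ℝ) * q with hD
        have hD0 : (0 : ℝ) < D := mul_pos hB0 hq0
        have hkey : |x - (GenContFract.of x).convs m| ≤ 1 / (2 * D) := by
          refine le_trans habs ?_
          rw [hden]
          apply one_div_le_one_div_of_le (by positivity)
          calc 2 * D = (B : ℝ) * (2 * q) := by rw [hD]; ring
            _ ≤ (B : ℝ) * (GenContFract.of x).dens (m + 1) :=
              mul_le_mul_of_nonneg_left h3 (le_of_lt hB0)
        have htri : |(A : ℝ) / B - (p : ℝ) / q| ≤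
            |x - (GenContFract.of x).convs m| + |x - (p : ℝ) / q| := by
          rw [← hconv]
          calc |(GenContFract.of x).convs m - (p : ℝ) / q|
              ≤ |(GenContFract.of x).convs m - x| + |x - (p : ℝ) / q| := abs_sub_le _ _ _
            _ = |x - (GenContFract.of x).convs m| + |x - (p : ℝ) / q| := by
                rw [abs_sub_comm]
        have hhalf : 1 / D - 1 / (2 * D) = 1 / (2 * D) := by
          field_simp
          ring
        have habsnn : 0 ≤ |x - (GenContFract.of x).convs m| := abs_nonneg _
        linarith
end

section
/- If f : [t₀,∞) → [0,∞) is continuous and recursively integrable, then f is integrable, i.e. ∫_{t₁}^∞ f(x) dx < ∞ for some t₁ ≥ t₀. -/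
open Set MeasureTheory intervalIntegral

/-- `f` is recursively integrable on `[t₀, ∞)`: for some `t₁ ≥ t₀`, the differential
equation `-g′(x) = g(x)² + f(x)` has a nonnegative solution `g` on `[t₁, ∞)`. -/
def RecInt (t₀ : ℝ) (f : ℝ → ℝ) : Prop :=
  ∃ t₁ : ℝ, t₀ ≤ t₁ ∧ ∃ g : ℝ → ℝ, (∀ x, t₁ ≤ x → 0 ≤ g x) ∧
    ∀ x, t₁ ≤ x → HasDerivWithinAt g (-(g x ^ 2 + f x)) (Set.Ici t₁) x

/-- A recursively integrable function is integrable on a tail interval. -/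
theorem recInt_integrable (t₀ : ℝ) (f : ℝ → ℝ)
    (hfc : ContinuousOn f (Set.Ici t₀)) (hf0 : ∀ x, t₀ ≤ x → 0 ≤ f x)
    (hrec : RecInt t₀ f) :
    ∃ t₁ : ℝ, t₀ ≤ t₁ ∧ MeasureTheory.IntegrableOn f (Set.Ici t₁) := by
  obtain ⟨t₁, ht₁, g, hg0, hgd⟩ := hrec
  refine ⟨t₁, ht₁, ?_⟩
  have hfc1 : ContinuousOn f (Ici t₁) := hfc.mono (Ici_subset_Ici.2 ht₁)
  have hgc : ContinuousOn g (Ici t₁) := fun x hx => (hgd x hx).continuousWithinAt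
  -- interval integrability on [t₁, b]
  have hfi : ∀ b : ℝ, t₁ ≤ b → IntervalIntegrable f volume t₁ b := by
    intro b hb
    exact (hfc1.mono (by rw [uIcc_of_le hb]; exact Icc_subset_Ici_self)).intervalIntegrable
  have hGi : ∀ b : ℝ, t₁ ≤ b →
      IntervalIntegrable (fun x => g x ^ 2 + f x) volume t₁ b := by
    intro b hb
    have : ContinuousOn (fun x => g x ^ 2 + f x) (Ici t₁) := (hgc.pow 2).add hfc1
    exact (this.mono (by rw [uIcc_of_le hb]; exact Icc_subset_Ici_self)).intervalIntegrable
  -- FTC bound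
  have key : ∀ b : ℝ, t₁ ≤ b → ∫ x in t₁..b, f x ≤ g t₁ := by
    intro b hb
    have hftc : ∫ x in t₁..b, -(g x ^ 2 + f x) = g b - g t₁ := by
      refine integral_eq_sub_of_hasDeriv_right_of_le hb
        (hgc.mono Icc_subset_Ici_self) (fun x hx => ?_) ((hGi b hb).neg)
      have hx1 : t₁ < x := hx.1
      have : HasDerivAt g (-(g x ^ 2 + f x)) x :=
        (hgd x hx1.le).hasDerivAt (Filter.mem_of_superset (Ioi_mem_nhds hx1) Ioi_subset_Ici_self)
      exact this.hasDerivWithinAt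
    have h1 : ∫ x in t₁..b, (g x ^ 2 + f x) = g t₁ - g b := by
      have := hftc
      rw [intervalIntegral.integral_neg] at this
      linarith
    have h2 : ∫ x in t₁..b, f x ≤ ∫ x in t₁..b, (g x ^ 2 + f x) := by
      refine intervalIntegral.integral_mono_on hb (hfi b hb) (hGi b hb) (fun x hx => ?_)
      nlinarith [sq_nonneg (g x)]
    have h3 : 0 ≤ g b := hg0 b hb
    linarith [hg0 t₁ le_rfl]
  have : IntegrableOn f (Ioi t₁) := by
    refine integrableOn_Ioi_of_intervalIntegral_norm_bounded (b := fun n : ℕ => t₁ + n)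
      (g t₁) t₁ (fun n => ?_) (Filter.tendsto_atTop_add_const_left _ _
        tendsto_natCast_atTop_atTop) ?_
    · have hb : t₁ ≤ t₁ + (n : ℝ) := le_add_of_nonneg_right (Nat.cast_nonneg _)
      exact (hfi _ hb).1
    · filter_upwards with n
      have hb : t₁ ≤ t₁ + (n : ℝ) := le_add_of_nonneg_right (Nat.cast_nonneg _)
      have : ∫ x in t₁..(t₁ + (n:ℝ)), ‖f x‖ = ∫ x in t₁..(t₁ + (n:ℝ)), f x := by
        refine intervalIntegral.integral_congr (fun x hx => ?_)
        rw [uIcc_of_le hb] at hx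
        exact Real.norm_of_nonneg (hf0 x (le_trans ht₁ hx.1))
      rw [this]
      exact key _ hb
  rw [integrableOn_Ici_iff_integrableOn_Ioi]
  exact this
end

section
/- If 0 ≤ f₁ ≤ f₂ pointwise, f₁ and f₂ are continuous on [t₀,∞), and f₂ is recursively integrable, then f₁ is recursively integrable. -/
open Set NNReal

theorem le_of_hasDerivWithinAt_Ici {f f' B B' : ℝ → ℝ} {a : ℝ}
    (hf : ∀ x, a ≤ x → HasDerivWithinAt f (f' x) (Ici a) x)
    (hB : ∀ x, a ≤ x → HasDerivWithinAt B (B' x) (Ici a) x) (ha : f a ≤ B a)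
    (bound : ∀ x, a ≤ x → B x < f x → f' x ≤ B' x) {x : ℝ} (hx : a ≤ x) : f x ≤ B x := by
  have hxa : 0 < x - a + 1 := by linarith
  refine le_of_forall_pos_le_add fun ε hε => ?_
  -- the fencing lemma needs `f' < B'` at contact points; the margin `δ * (y - a + 1)` supplies it
  set δ := ε / (x - a + 1)
  have hδ : 0 < δ := div_pos hε hxa
  have hfence : f x ≤ B x + δ * (x - a + 1) := by
    refine image_le_of_deriv_right_lt_deriv_boundary' (B := fun y => B y + δ * (y - a + 1))
      (B' := fun y => B' y + δ) (fun y hy => (hf y hy.1).continuousWithinAt.mono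
        Icc_subset_Ici_self) (fun y hy => (hf y hy.1).mono (Ici_subset_Ici.2 hy.1))
      (by linarith) (fun y hy => ((hB y hy.1).continuousWithinAt.add
        (by fun_prop : Continuous fun y => δ * (y - a + 1)).continuousWithinAt).mono
        Icc_subset_Ici_self) (fun y hy => ?_) (fun y hy hfy => ?_) ⟨hx, le_rfl⟩
    · simpa only [mul_one, id_eq] using ((hB y hy.1).mono (Ici_subset_Ici.2 hy.1)).fun_add
        ((((hasDerivWithinAt_id y _).sub_const a).add_const 1).const_mul δ)
    · have : B y < f y := by rw [hfy]; nlinarith [hy.1]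
      linarith [bound y hy.1 this]
  rwa [div_mul_cancel₀ _ hxa.ne'] at hfence

section HalfLine

variable {E : Type*} [NormedAddCommGroup E] [NormedSpace ℝ E] {v : ℝ → E → E} {K : ℝ≥0}
  {a b : ℝ} {x₀ : E}

theorem exists_eq_forall_mem_Icc_hasDerivWithinAt_of_norm_le [CompleteSpace E]
    (hlip : ∀ t ∈ Icc a b, LipschitzWith K (v t)) (hcont : ∀ x, ContinuousOn (v · x) (Icc a b))
    {C : ℝ} (hC : ∀ t ∈ Icc a b, ∀ x, ‖v t x‖ ≤ C) (hab : a ≤ b) :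
    ∃ α : ℝ → E, α a = x₀ ∧ ∀ t ∈ Icc a b, HasDerivWithinAt α (v t (α t)) (Icc a b) t := by
  have hC₀ : 0 ≤ C := (norm_nonneg _).trans (hC a (left_mem_Icc.2 hab) x₀)
  have hpl : IsPicardLindelof v (⟨a, left_mem_Icc.2 hab⟩ : Icc a b) x₀
      (C * (b - a)).toNNReal 0 C.toNNReal K :=
    { lipschitzOnWith := fun t ht => (hlip t ht).lipschitzOnWith
      continuousOn := fun x _ => hcont x
      norm_le := fun t ht x _ => by rw [Real.coe_toNNReal _ hC₀]; exact hC t ht x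
      mul_max_le := by
        simp only [Real.coe_toNNReal _ hC₀, NNReal.coe_zero, sub_zero, sub_self,
          max_eq_left (sub_nonneg.2 hab), Real.coe_toNNReal _ (mul_nonneg hC₀ (sub_nonneg.2 hab))]
        exact le_rfl }
  exact hpl.exists_eq_forall_mem_Icc_hasDerivWithinAt₀

theorem HasDerivWithinAt.Ici_of_Icc {f : ℝ → E} {f' : E} {t : ℝ}
    (hf : HasDerivWithinAt f f' (Icc a b) t) (ht : t ∈ Ico a b) :
    HasDerivWithinAt f f' (Ici t) t :=
  (hf.mono (Icc_subset_Icc_left ht.1)).mono_of_mem_nhdsWithin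
    (Icc_mem_nhdsGE_of_mem ⟨le_rfl, ht.2⟩)

theorem exists_forall_hasDerivWithinAt_Ici_of_forall_Icc (hlip : ∀ t, LipschitzWith K (v t))
    (hsol : ∀ b, a ≤ b → ∃ α : ℝ → E, α a = x₀ ∧
      ∀ t ∈ Icc a b, HasDerivWithinAt α (v t (α t)) (Icc a b) t) :
    ∃ g : ℝ → E, g a = x₀ ∧ ∀ t, a ≤ t → HasDerivWithinAt g (v t (g t)) (Ici a) t := by
  choose α hα₀ hα using fun n : ℕ => hsol (a + n) (by simp)
  have hcont (n : ℕ) : ContinuousOn (α n) (Icc a (a + n)) :=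
    fun t ht => (hα n t ht).continuousWithinAt
  have heq {m n : ℕ} (hmn : m ≤ n) : EqOn (α m) (α n) (Icc a (a + m)) := by
    have hmn' : a + m ≤ a + n := by simpa using hmn
    refine ODE_solution_unique hlip (hcont m)
      (fun t ht => (hα m t (Ico_subset_Icc_self ht)).Ici_of_Icc ht)
      ((hcont n).mono (Icc_subset_Icc_right hmn')) (fun t ht => ?_) (by rw [hα₀, hα₀])
    exact (hα n t ⟨ht.1, ht.2.le.trans hmn'⟩).Ici_of_Icc ⟨ht.1, ht.2.trans_le hmn'⟩
  let N (t : ℝ) : ℕ := ⌊t - a⌋₊ + 1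
  have hN {t : ℝ} : t < a + N t := by
    have := Nat.lt_floor_add_one (t - a); push_cast [N]; linarith
  have hg {n : ℕ} {t : ℝ} (ht : t ∈ Icc a (a + n)) : α (N t) t = α n t := by
    rcases le_total (N t) n with h | h
    · exact heq h ⟨ht.1, hN.le⟩
    · exact (heq h ht).symm
  refine ⟨fun t => α (N t) t, hα₀ _, fun t ht => ?_⟩
  have hmem : Icc a (a + N t) ∈ nhdsWithin t (Ici a) := by
    rw [← Ici_inter_Iic]; exact inter_mem_nhdsWithin _ (Iic_mem_nhds hN)
  refine ((hα (N t) t ⟨ht, hN.le⟩).mono_of_mem_nhdsWithin hmem).congr_of_eventuallyEq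
    (Filter.eventuallyEq_of_mem hmem fun s hs => hg hs) rfl

theorem exists_forall_hasDerivWithinAt_Ici [CompleteSpace E] (hlip : ∀ t, LipschitzWith K (v t))
    (hcont : ∀ x, ContinuousOn (v · x) (Ici a))
    (hbdd : ∀ b, ∃ C, ∀ t ∈ Icc a b, ∀ x, ‖v t x‖ ≤ C) :
    ∃ g : ℝ → E, g a = x₀ ∧ ∀ t, a ≤ t → HasDerivWithinAt g (v t (g t)) (Ici a) t :=
  exists_forall_hasDerivWithinAt_Ici_of_forall_Icc hlip fun b hab =>
    let ⟨_, hC⟩ := hbdd b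
    exists_eq_forall_mem_Icc_hasDerivWithinAt_of_norm_le (fun t _ => hlip t)
      (fun x => (hcont x).mono Icc_subset_Ici_self) hC hab

end HalfLine

theorem lipschitzWith_sq_projIcc {M : ℝ} (hM : 0 ≤ M) :
    LipschitzWith (2 * M).toNNReal fun y => (projIcc 0 M hM y : ℝ) ^ 2 := by
  refine LipschitzWith.of_dist_le_mul fun y z => ?_
  obtain ⟨hp₀, hpM⟩ := (projIcc 0 M hM y).2
  obtain ⟨hq₀, hqM⟩ := (projIcc 0 M hM z).2
  have hpq : |(projIcc 0 M hM y : ℝ) - projIcc 0 M hM z| ≤ |y - z| := by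
    simpa [Subtype.dist_eq, Real.dist_eq] using (LipschitzWith.projIcc hM).dist_le_mul y z
  rw [Real.dist_eq, Real.dist_eq, Real.coe_toNNReal _ (by positivity), sq_sub_sq, abs_mul,
    abs_of_nonneg (add_nonneg hp₀ hq₀)]
  exact mul_le_mul (by linarith) hpq (abs_nonneg _) (by positivity)

theorem exists_truncated_riccati_solution {f : ℝ → ℝ} {a M : ℝ} (hM : 0 ≤ M)
    (hf : ContinuousOn f (Ici a)) :
    ∃ g : ℝ → ℝ, g a = M ∧
      ∀ t, a ≤ t → HasDerivWithinAt g (-((projIcc 0 M hM (g t) : ℝ) ^ 2 + f t)) (Ici a) t := by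
  refine exists_forall_hasDerivWithinAt_Ici (K := (2 * M).toNNReal)
    (v := fun t y => -((projIcc 0 M hM y : ℝ) ^ 2 + f t))
    (fun t => .neg <| .of_dist_le_mul fun y z => by
      simpa only [dist_add_right] using (lipschitzWith_sq_projIcc hM).dist_le_mul y z)
    (fun y => (continuousOn_const.add hf).neg) fun b => ?_
  obtain ⟨F, hF⟩ :=
    isCompact_Icc.exists_bound_of_continuousOn (hf.mono (Icc_subset_Ici_self : Icc a b ⊆ Ici a))
  refine ⟨M ^ 2 + F, fun t ht y => ?_⟩
  obtain ⟨hp₀, hpM⟩ := (projIcc 0 M hM y).2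
  rw [norm_neg]
  calc ‖(projIcc 0 M hM y : ℝ) ^ 2 + f t‖ ≤ ‖(projIcc 0 M hM y : ℝ) ^ 2‖ + ‖f t‖ :=
        norm_add_le _ _
    _ ≤ M ^ 2 + F := by
      gcongr
      · rw [Real.norm_eq_abs, abs_of_nonneg (by positivity)]; gcongr
      · exact hF t ht

theorem recInt_of_le_general (t₀ : ℝ) (f₁ f₂ : ℝ → ℝ)
    (hf₁c : ContinuousOn f₁ (Set.Ici t₀))
    (h0 : ∀ x, t₀ ≤ x → 0 ≤ f₁ x) (hle : ∀ x, t₀ ≤ x → f₁ x ≤ f₂ x)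
    (hrec : RecInt t₀ f₂) : RecInt t₀ f₁ := by
  obtain ⟨t₁, ht₀₁, g₂, hg₂₀, hg₂⟩ := hrec
  have hf₁₀ (x : ℝ) (hx : t₁ ≤ x) : 0 ≤ f₁ x := h0 x (ht₀₁.trans hx)
  have hf₁₂ (x : ℝ) (hx : t₁ ≤ x) : f₁ x ≤ f₂ x := hle x (ht₀₁.trans hx)
  set M := g₂ t₁
  have hM : 0 ≤ M := hg₂₀ t₁ le_rfl
  set π : ℝ → ℝ := fun y => projIcc 0 M hM y
  obtain ⟨g, hg_init, hg⟩ :=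
    exists_truncated_riccati_solution hM (hf₁c.mono (Ici_subset_Ici.2 ht₀₁))
  have hconst (x : ℝ) (_ : t₁ ≤ x) : HasDerivWithinAt (fun _ => M) 0 (Ici t₁) x :=
    hasDerivWithinAt_const x _ M
  have hg₂_le (x : ℝ) (hx : t₁ ≤ x) : g₂ x ≤ M :=
    le_of_hasDerivWithinAt_Ici hg₂ hconst le_rfl
      (fun y hy _ => by nlinarith [hg₂₀ y hy, hf₁₀ y hy, hf₁₂ y hy]) hx
  have hg_le (x : ℝ) (hx : t₁ ≤ x) : g x ≤ M :=
    le_of_hasDerivWithinAt_Ici hg hconst hg_init.le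
      (fun y hy _ => by nlinarith [(projIcc 0 M hM (g y)).2.1, hf₁₀ y hy]) hx
  have hg₂_le_g (x : ℝ) (hx : t₁ ≤ x) : g₂ x ≤ g x := by
    refine le_of_hasDerivWithinAt_Ici hg₂ hg hg_init.ge (fun y hy hlt => ?_) hx
    have hπg₂ : π (g₂ y) = g₂ y :=
      congrArg Subtype.val (projIcc_of_mem hM ⟨hg₂₀ y hy, hg₂_le y hy⟩)
    have hπ : π (g y) ≤ g₂ y := hπg₂ ▸ monotone_projIcc hM hlt.le
    nlinarith [(projIcc 0 M hM (g y)).2.1, hf₁₂ y hy]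
  refine ⟨t₁, ht₀₁, g, fun x hx => (hg₂₀ x hx).trans (hg₂_le_g x hx), fun x hx => ?_⟩
  have hπg : π (g x) = g x :=
    congrArg Subtype.val (projIcc_of_mem hM ⟨(hg₂₀ x hx).trans (hg₂_le_g x hx), hg_le x hx⟩)
  rw [← hπg]
  exact hg x hx

/-- Comparison: if `0 ≤ f₁ ≤ f₂` and `f₂` is recursively integrable, so is `f₁`. -/
theorem recInt_of_le (t₀ : ℝ) (f₁ f₂ : ℝ → ℝ)
    (hf₁c : ContinuousOn f₁ (Set.Ici t₀)) (hf₂c : ContinuousOn f₂ (Set.Ici t₀))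
    (h0 : ∀ x, t₀ ≤ x → 0 ≤ f₁ x) (hle : ∀ x, t₀ ≤ x → f₁ x ≤ f₂ x)
    (hrec : RecInt t₀ f₂) : RecInt t₀ f₁ :=
  recInt_of_le_general t₀ f₁ f₂ hf₁c h0 hle hrec
end

section
/- For C > 0, the function f(x) = C/x² on [1,∞) is recursively integrable if and only if C ≤ 1/4. -/
/-!
For `C ≤ 1/4` the ansatz `g x = a / x` solves `-g' = g² + C/x²` exactly when `a² - a + C = 0`,
which has the nonnegative root `a = (1 + √(1 - 4C)) / 2`.

Conversely, along any solution `g`,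
`(x g)' = -x (g - 1/(2x))² - (C - 1/4)/x`,
so `x g x + (C - 1/4) log x` is antitone. If `C > 1/4` this forces `x g x → -∞`,
contradicting `g ≥ 0`.
-/

open Real Set Filter

theorem exists_nonneg_sq_add_eq_self {C : ℝ} (hC : C ≤ 1 / 4) :
    ∃ a : ℝ, 0 ≤ a ∧ a ^ 2 + C = a := by
  have hsq : √(1 - 4 * C) ^ 2 = 1 - 4 * C := sq_sqrt (by linarith)
  refine ⟨(1 + √(1 - 4 * C)) / 2, by positivity, ?_⟩
  linear_combination hsq / 4

theorem hasDerivAt_const_div_riccati {a C x : ℝ} (ha : a ^ 2 + C = a) (hx : x ≠ 0) :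
    HasDerivAt (fun y => a / y) (-((a / x) ^ 2 + C / x ^ 2)) x := by
  have h : HasDerivAt (fun y => a / y) (a * -(x ^ 2)⁻¹) x := by
    simpa only [div_eq_mul_inv] using (hasDerivAt_inv hx).const_mul a
  refine h.congr_deriv ?_
  rw [div_pow, ← add_div, ha]
  ring

theorem recInt_const_div_sq_of_le {C : ℝ} (hC : C ≤ 1 / 4) :
    RecInt 1 (fun x => C / x ^ 2) := by
  obtain ⟨a, ha0, ha⟩ := exists_nonneg_sq_add_eq_self hC
  refine ⟨1, le_rfl, fun x => a / x, fun x hx => div_nonneg ha0 (by linarith), fun x hx => ?_⟩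
  exact (hasDerivAt_const_div_riccati ha (by linarith)).hasDerivWithinAt

theorem antitoneOn_mul_add_log_of_riccati {C t₁ : ℝ} {g : ℝ → ℝ} (ht₁ : 0 < t₁)
    (hg : ∀ x, t₁ ≤ x → HasDerivWithinAt g (-(g x ^ 2 + C / x ^ 2)) (Ici t₁) x) :
    AntitoneOn (fun x => x * g x + (C - 1 / 4) * log x) (Ici t₁) := by
  have hderiv : ∀ x ∈ Ici t₁, HasDerivWithinAt (fun x => x * g x + (C - 1 / 4) * log x)
      (-(x * (g x - 1 / (2 * x)) ^ 2)) (Ici t₁) x := by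
    intro x hx
    have hx0 : 0 < x := ht₁.trans_le hx
    refine (((hasDerivWithinAt_id x _).mul (hg x hx)).add
      ((hasDerivAt_log hx0.ne').const_mul (C - 1 / 4)).hasDerivWithinAt).congr_deriv ?_
    simp only [id]
    field_simp
    ring
  refine antitoneOn_of_hasDerivWithinAt_nonpos (f' := fun x => -(x * (g x - 1 / (2 * x)) ^ 2))
    (convex_Ici t₁) (fun x hx => (hderiv x hx).continuousWithinAt) (fun x hx => ?_)
    (fun x hx => ?_)
  all_goals rw [interior_Ici] at hx
  · rw [interior_Ici]
    exact (hderiv x (Ioi_subset_Ici_self hx)).mono Ioi_subset_Ici_self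
  · exact neg_nonpos.2 (mul_nonneg (ht₁.trans hx).le (sq_nonneg _))

theorem le_quarter_of_recInt_const_div_sq {C t₀ : ℝ} (ht₀ : 0 < t₀)
    (h : RecInt t₀ (fun x => C / x ^ 2)) : C ≤ 1 / 4 := by
  obtain ⟨t₁, ht₀₁, g, hg0, hg⟩ := h
  by_contra! hC
  set φ := fun x => x * g x + (C - 1 / 4) * log x
  have hφ := antitoneOn_mul_add_log_of_riccati (ht₀.trans_le ht₀₁) hg
  obtain ⟨x, hlog, hx⟩ := (((tendsto_log_atTop.const_mul_atTop (by linarith : 0 < C - 1 / 4))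
    |>.eventually_gt_atTop (φ t₁)).and (eventually_ge_atTop t₁)).exists
  have hφx : φ x ≤ φ t₁ := hφ self_mem_Ici hx hx
  have hxg : 0 ≤ x * g x := mul_nonneg (ht₀.trans_le (ht₀₁.trans hx)).le (hg0 x hx)
  simp only [φ] at hφx hlog
  linarith

theorem recInt_const_div_sq_iff_general (C : ℝ) :
    RecInt 1 (fun x => C / x ^ 2) ↔ C ≤ 1 / 4 :=
  ⟨le_quarter_of_recInt_const_div_sq one_pos, recInt_const_div_sq_of_le⟩

/-- For `C > 0`, the function `x ↦ C / x²` on `[1, ∞)` is recursively integrable iff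
`C ≤ 1/4`. -/
theorem recInt_const_div_sq_iff (C : ℝ) (hC : 0 < C) :
    RecInt 1 (fun x => C / x ^ 2) ↔ C ≤ 1 / 4 :=
  recInt_const_div_sq_iff_general C
end

section
/- Let f : [t₀,∞) → [0,∞) be continuous and define F(x) = (1/x²)·(1/4 + f(log x)) for x ≥ e^{t₀}. Then f is recursively integrable if and only if F is recursively integrable. -/
open Set Real

lemma monotoneOn_Ici_of_hasDerivWithinAt_nonneg {f f' : ℝ → ℝ} {a : ℝ}
    (hf : ∀ x, a ≤ x → HasDerivWithinAt f (f' x) (Ici a) x) (hf' : ∀ x, a < x → 0 ≤ f' x) :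
    MonotoneOn f (Ici a) := by
  refine monotoneOn_of_hasDerivWithinAt_nonneg (f' := f') (convex_Ici a)
    (fun x hx => (hf x hx).continuousWithinAt) (fun x hx => ?_) (fun x hx => ?_)
  · rw [interior_Ici] at hx ⊢
    exact (hf x hx.le).mono Ioi_subset_Ici_self
  · rw [interior_Ici] at hx
    exact hf' x hx

/-- A function with `g' ≤ -g²` on a half-line cannot become negative: once `g(b) < 0`,
`1/g(x) - x` is nondecreasing, so `1/g` would reach `0` in finite time. -/
lemma nonneg_of_hasDerivWithinAt_le_neg_sq {g g' : ℝ → ℝ} {a : ℝ}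
    (hg : ∀ x, a ≤ x → HasDerivWithinAt g (g' x) (Ici a) x)
    (hg' : ∀ x, a ≤ x → g' x ≤ -g x ^ 2) :
    ∀ x, a ≤ x → 0 ≤ g x := by
  intro b hb
  by_contra! hgb
  have hderiv : ∀ x, b ≤ x → HasDerivWithinAt g (g' x) (Ici b) x := fun x hx =>
    (hg x (hb.trans hx)).mono (Ici_subset_Ici.2 hb)
  have hneg : ∀ x, b ≤ x → g x < 0 := by
    have hanti : MonotoneOn (fun x => -g x) (Ici b) :=
      monotoneOn_Ici_of_hasDerivWithinAt_nonneg (fun x hx => (hderiv x hx).neg)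
        fun x hx => by nlinarith [hg' x (hb.trans hx.le), sq_nonneg (g x)]
    exact fun x hx => (neg_le_neg_iff.1 (hanti self_mem_Ici hx hx)).trans_lt hgb
  have hmono : MonotoneOn (fun x => (g x)⁻¹ - x) (Ici b) := by
    refine monotoneOn_Ici_of_hasDerivWithinAt_nonneg
      (fun x hx => ((hderiv x hx).inv (hneg x hx).ne).sub (hasDerivWithinAt_id x _))
      fun x hx => ?_
    have hsq : 0 < g x ^ 2 := by nlinarith [hneg x hx.le]
    rw [sub_nonneg, neg_div, le_neg, div_le_iff₀ hsq]
    linarith [hg' x (hb.trans hx.le)]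
  have hinv : (g b)⁻¹ < 0 := inv_lt_zero.2 hgb
  have hc : b ≤ b + 1 - (g b)⁻¹ := by linarith
  have hgrowth := hmono self_mem_Ici hc hc
  have hinv_c : (g (b + 1 - (g b)⁻¹))⁻¹ < 0 := inv_lt_zero.2 (hneg _ hc)
  linarith

def IsRiccatiSolution (f g : ℝ → ℝ) (t₁ : ℝ) : Prop :=
  ∀ x, t₁ ≤ x → HasDerivWithinAt g (-(g x ^ 2 + f x)) (Ici t₁) x

lemma IsRiccatiSolution.log_transform {f g : ℝ → ℝ} {t₁ : ℝ} (hg : IsRiccatiSolution f g t₁) :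
    IsRiccatiSolution (fun x => 1 / x ^ 2 * (1 / 4 + f (log x)))
      (fun x => x⁻¹ * (1 / 2 + g (log x))) (exp t₁) := by
  intro x hx
  have hx0 : 0 < x := (exp_pos t₁).trans_le hx
  have hmaps : MapsTo log (Ici (exp t₁)) (Ici t₁) := fun y hy =>
    (le_log_iff_exp_le ((exp_pos t₁).trans_le hy)).2 hy
  have hcomp := (hg (log x) (hmaps hx)).comp x (hasDerivAt_log hx0.ne').hasDerivWithinAt hmaps
  refine ((hasDerivAt_inv hx0.ne').hasDerivWithinAt.mul (hcomp.const_add (1 / 2))).congr_deriv ?_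
  simp only [Function.comp_apply]
  field_simp
  ring

lemma IsRiccatiSolution.exp_transform {f G : ℝ → ℝ} {s₁ : ℝ} (hs₁ : 0 < s₁)
    (hG : IsRiccatiSolution (fun x => 1 / x ^ 2 * (1 / 4 + f (log x))) G s₁) :
    IsRiccatiSolution f (fun t => exp t * G (exp t) - 1 / 2) (log s₁) := by
  intro t ht
  have hmaps : MapsTo exp (Ici (log s₁)) (Ici s₁) := fun y hy => (log_le_iff_le_exp hs₁).1 hy
  have hcomp := (hG (exp t) (hmaps ht)).comp t (hasDerivAt_exp t).hasDerivWithinAt hmaps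
  refine (((hasDerivAt_exp t).hasDerivWithinAt.mul hcomp).sub_const (1 / 2)).congr_deriv ?_
  simp only [log_exp, Function.comp_apply]
  field_simp
  ring

theorem recInt_log_transform_general (t₀ : ℝ) (f : ℝ → ℝ)
    (hf0 : ∀ x, t₀ ≤ x → 0 ≤ f x) :
    RecInt t₀ f ↔
      RecInt (Real.exp t₀) (fun x => (1 / x ^ 2) * (1 / 4 + f (Real.log x))) := by
  constructor
  · rintro ⟨t₁, ht₁, g, hg0, hg⟩
    refine ⟨exp t₁, exp_le_exp.2 ht₁, _, fun x hx => ?_, IsRiccatiSolution.log_transform hg⟩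
    have hx0 : 0 < x := (exp_pos t₁).trans_le hx
    have := hg0 (log x) ((le_log_iff_exp_le hx0).2 hx)
    positivity
  · rintro ⟨s₁, hs₁, G, -, hG⟩
    have hs₁0 : 0 < s₁ := (exp_pos t₀).trans_le hs₁
    have hg := IsRiccatiSolution.exp_transform hs₁0 hG
    have ht₁ : t₀ ≤ log s₁ := (le_log_iff_exp_le hs₁0).2 hs₁
    refine ⟨log s₁, ht₁, _, nonneg_of_hasDerivWithinAt_le_neg_sq hg fun x hx => ?_, hg⟩
    linarith [hf0 x (ht₁.trans hx)]

/-- `f` is recursively integrable iff `F x = (1/x²) * (1/4 + f (log x))` is. -/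
theorem recInt_log_transform (t₀ : ℝ) (f : ℝ → ℝ)
    (hfc : ContinuousOn f (Set.Ici t₀)) (hf0 : ∀ x, t₀ ≤ x → 0 ≤ f x) :
    RecInt t₀ f ↔
      RecInt (Real.exp t₀) (fun x => (1 / x ^ 2) * (1 / 4 + f (Real.log x))) :=
  recInt_log_transform_general t₀ f hf0
end

section
/- Suppose g : [t₁,∞) → ℝ is differentiable, bounded below, and satisfies -g'(x) ≥ g(x)² for all x. Then g(x) → 0 as x → ∞ and g(x) ≥ 0 for all x ≥ t₁. -/
private lemma aux_antitone_shift (t₁ a : ℝ) (ha : t₁ ≤ a) (g g' : ℝ → ℝ)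
    (hg : ∀ x, t₁ ≤ x → HasDerivWithinAt g (g' x) (Set.Ici t₁) x)
    (c : ℝ) (hc : ∀ x, a ≤ x → g' x + c ≤ 0) :
    AntitoneOn (fun x => g x + c * x) (Set.Ici a) := by
  have hsub : Set.Ici a ⊆ Set.Ici t₁ := Set.Ici_subset_Ici.2 ha
  have hderivAt : ∀ x ∈ Set.Ioi a, HasDerivAt (fun x => g x + c * x) (g' x + c) x := by
    intro x hx
    have hx' : t₁ < x := lt_of_le_of_lt ha hx
    have h1 : HasDerivAt g (g' x) x :=
      (hg x hx'.le).hasDerivAt (Ici_mem_nhds hx')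
    have h2 : HasDerivAt (fun x => c * x) c x := by
      simpa using (hasDerivAt_id x).const_mul c
    exact h1.add h2
  apply antitoneOn_of_deriv_nonpos (convex_Ici a)
  · intro x hx
    exact (((hg x (ha.trans hx)).continuousWithinAt).mono hsub).add
      (Continuous.continuousWithinAt (by continuity))
  · intro x hx
    rw [interior_Ici] at hx
    exact (hderivAt x hx).differentiableAt.differentiableWithinAt
  · intro x hx
    rw [interior_Ici] at hx
    rw [(hderivAt x hx).deriv]
    exact hc x hx.le

/-- If `g` is differentiable on `[t₁, ∞)`, bounded below, and `-g′ ≥ g²`, then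
`g → 0` at infinity and `g ≥ 0` on `[t₁, ∞)`. -/
theorem tendsto_zero_and_nonneg_of_neg_deriv_ge_sq (t₁ : ℝ) (g g' : ℝ → ℝ)
    (hg : ∀ x, t₁ ≤ x → HasDerivWithinAt g (g' x) (Set.Ici t₁) x)
    (hbdd : ∃ m : ℝ, ∀ x, t₁ ≤ x → m ≤ g x)
    (hineq : ∀ x, t₁ ≤ x → g x ^ 2 ≤ -g' x) :
    Filter.Tendsto g Filter.atTop (nhds 0) ∧ ∀ x, t₁ ≤ x → 0 ≤ g x := by
  obtain ⟨m, hm⟩ := hbdd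
  -- g is antitone on [t₁, ∞)
  have hanti : AntitoneOn g (Set.Ici t₁) := by
    have := aux_antitone_shift t₁ t₁ le_rfl g g' hg 0 (fun x hx => by
      have := hineq x hx
      nlinarith [sq_nonneg (g x)])
    simpa using this
  set S := g '' Set.Ici t₁ with hS
  have hSne : S.Nonempty := ⟨g t₁, t₁, le_refl t₁, rfl⟩
  have hSbdd : BddBelow S := ⟨m, by rintro y ⟨x, hx, rfl⟩; exact hm x hx⟩
  set L := sInf S with hLdef
  have hL_le : ∀ x, t₁ ≤ x → L ≤ g x := fun x hx => csInf_le hSbdd ⟨x, hx, rfl⟩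
  -- g tends to L
  have htend : Filter.Tendsto g Filter.atTop (nhds L) := by
    rw [tendsto_order]
    constructor
    · intro a ha
      filter_upwards [Filter.eventually_ge_atTop t₁] with x hx
      exact lt_of_lt_of_le ha (hL_le x hx)
    · intro a ha
      obtain ⟨y, ⟨x₀, hx₀, rfl⟩, hya⟩ := exists_lt_of_csInf_lt hSne ha
      filter_upwards [Filter.eventually_ge_atTop x₀] with x hx
      exact lt_of_le_of_lt (hanti hx₀ (hx₀.trans hx) hx) hya
  -- key contradiction: g² can't be bounded away from 0
  have key : ∀ x₀, t₁ ≤ x₀ → ∀ c, 0 < c → (∀ x, x₀ ≤ x → c ≤ g x ^ 2) → False := by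
    intro x₀ hx₀ c hc hgc
    have hanti2 : AntitoneOn (fun x => g x + c * x) (Set.Ici x₀) := by
      apply aux_antitone_shift t₁ x₀ hx₀ g g' hg c
      intro x hx
      have h1 := hineq x (hx₀.trans hx)
      have h2 := hgc x hx
      linarith
    set x := max x₀ (x₀ + (g x₀ - m) / c + 1) with hxdef
    have hxx₀ : x₀ ≤ x := le_max_left _ _
    have hx2 : x₀ + (g x₀ - m) / c + 1 ≤ x := le_max_right _ _
    have h3 := hanti2 (Set.self_mem_Ici) (Set.mem_Ici.2 hxx₀) hxx₀
    simp only at h3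
    have h4 : m ≤ g x := hm x (hx₀.trans hxx₀)
    have h5 : c * ((g x₀ - m) / c) = g x₀ - m := mul_div_cancel₀ _ hc.ne'
    nlinarith
  -- L = 0
  have hL0 : L = 0 := by
    rcases lt_trichotomy L 0 with h | h | h
    · exfalso
      have hev : ∀ᶠ x in Filter.atTop, g x < L / 2 :=
        htend.eventually (eventually_lt_nhds (by linarith))
      obtain ⟨x₀, hx₀⟩ := ((hev.and (Filter.eventually_ge_atTop t₁)).exists)
      obtain ⟨hgx₀, hx₀t⟩ := hx₀
      refine key x₀ hx₀t ((L / 2) ^ 2) (by nlinarith) ?_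
      intro x hx
      have : g x ≤ g x₀ := hanti hx₀t (hx₀t.trans hx) hx
      nlinarith
    · exact h
    · exfalso
      refine key t₁ le_rfl (L ^ 2) (by nlinarith) ?_
      intro x hx
      have := hL_le x hx
      nlinarith
  exact ⟨hL0 ▸ htend, fun x hx => hL0 ▸ hL_le x hx⟩
end

section
/- Let f : [t₀,∞) → [0,∞) be continuous and nonincreasing, and suppose there exists a nonnegative sequence (S_k)_{k≥k₀} satisfying S_k - S_{k+1} ≥ S_{k+1}² + f(k) for all k ≥ k₀. Then there exists a nonnegative sequence (S̃_k)_{k≥k₀} satisfying the equality S̃_k - S̃_{k+1} = S̃_{k+1}² + f(k) for all k ≥ k₀. -/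
/-- Backward recursion: `back f n j` is the value at index `n - j` of the sequence
that terminates in `0` at index `n`. -/
noncomputable def back (f : ℝ → ℝ) (n : ℕ) : ℕ → ℝ
  | 0 => 0
  | j + 1 => back f n j + (back f n j) ^ 2 + f ((n - (j + 1) : ℕ) : ℝ)

/-- (B1) ⟹ (B2): a nonnegative sequence satisfying the recursive inequality yields a
nonnegative sequence satisfying the recursive equality. -/
theorem recursive_inequality_to_equality (t₀ : ℝ) (f : ℝ → ℝ)
    (hfc : ContinuousOn f (Set.Ici t₀)) (hfm : AntitoneOn f (Set.Ici t₀))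
    (hf0 : ∀ x, t₀ ≤ x → 0 ≤ f x)
    (k₀ : ℕ) (hk₀ : t₀ ≤ (k₀ : ℝ)) (S : ℕ → ℝ)
    (hS0 : ∀ k, k₀ ≤ k → 0 ≤ S k)
    (hS : ∀ k, k₀ ≤ k → S (k + 1) ^ 2 + f k ≤ S k - S (k + 1)) :
    ∃ T : ℕ → ℝ, (∀ k, k₀ ≤ k → 0 ≤ T k) ∧
      ∀ k, k₀ ≤ k → T k - T (k + 1) = T (k + 1) ^ 2 + f k := by
  have hft : ∀ m : ℕ, k₀ ≤ m → 0 ≤ f m := fun m hm =>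
    hf0 m (hk₀.trans (Nat.cast_le.mpr hm))
  -- nonnegativity of the backward recursion
  have nonneg : ∀ j n, j ≤ n → k₀ ≤ n - j → 0 ≤ back f n j := by
    intro j
    induction j with
    | zero => intro n _ _; simp [back]
    | succ j ih =>
      intro n hj hk
      have h1 := ih n (by omega) (by omega)
      have h2 := hft (n - (j + 1)) hk
      simp only [back]
      nlinarith [h1, h2]
  -- the backward recursion is dominated by S
  have bound : ∀ j n, j ≤ n → k₀ ≤ n - j → back f n j ≤ S (n - j) := by
    intro j
    induction j with
    | zero => intro n _ _; simpa [back] using hS0 n (by omega)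
    | succ j ih =>
      intro n hj hk
      have hB0 := nonneg j n (by omega) (by omega)
      have hB := ih n (by omega) (by omega)
      have key := hS (n - (j + 1)) hk
      have heq : n - j = (n - (j + 1)) + 1 := by omega
      rw [heq] at hB
      simp only [back]
      nlinarith [hB0, hB, key]
  -- monotonicity in n
  have mono : ∀ j n, j ≤ n → k₀ ≤ n - j → back f n j ≤ back f (n + 1) (j + 1) := by
    intro j
    induction j with
    | zero =>
      intro n _ hk
      have h : (n + 1) - (0 + 1) = n := by omega
      simp only [back, h]
      have := hft n (by omega)
      norm_num
      linarith
    | succ j ih =>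
      intro n hj hk
      have hC := ih n (by omega) (by omega)
      have hB0 := nonneg j n (by omega) (by omega)
      have harg : (n + 1) - (j + 1 + 1) = n - (j + 1) := by omega
      have e1 : back f n (j + 1) = back f n j + (back f n j) ^ 2
          + f ((n - (j + 1) : ℕ) : ℝ) := rfl
      have e2 : back f (n + 1) (j + 1 + 1) = back f (n + 1) (j + 1)
          + (back f (n + 1) (j + 1)) ^ 2 + f (((n + 1) - (j + 1 + 1) : ℕ) : ℝ) := rfl
      rw [e1, e2, harg]
      nlinarith [hC, hB0]
  set a : ℕ → ℕ → ℝ := fun k n => back f n (n - k) with ha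
  have amono : ∀ k, k₀ ≤ k → Monotone (a k) := by
    intro k hk
    apply monotone_nat_of_le_succ
    intro n
    by_cases h : k ≤ n
    · have h1 : n + 1 - k = (n - k) + 1 := by omega
      simp only [ha, h1]
      exact mono (n - k) n (by omega) (by omega)
    · have h1 : n - k = 0 := by omega
      have h2 : n + 1 - k = 0 := by omega
      simp [ha, h1, h2, back]
  have abdd : ∀ k, k₀ ≤ k → ∀ n, a k n ≤ S k := by
    intro k hk n
    by_cases h : k ≤ n
    · have h2 : n - (n - k) = k := by omega
      have := bound (n - k) n (by omega) (by rw [h2]; exact hk)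
      rwa [h2] at this
    · have h1 : n - k = 0 := by omega
      simp only [ha, h1]
      simpa [back] using hS0 k hk
  set T : ℕ → ℝ := fun k => ⨆ n, a k n with hT
  have hbdd : ∀ k, k₀ ≤ k → BddAbove (Set.range (a k)) := by
    intro k hk
    exact ⟨S k, by rintro x ⟨n, rfl⟩; exact abdd k hk n⟩
  have htend : ∀ k, k₀ ≤ k → Filter.Tendsto (a k) Filter.atTop (nhds (T k)) := by
    intro k hk
    exact tendsto_atTop_ciSup (amono k hk) (hbdd k hk)
  refine ⟨T, ?_, ?_⟩
  · intro k hk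
    have h1 : a k k ≤ T k := le_ciSup (hbdd k hk) k
    have h2 : a k k = 0 := by simp [ha, back]
    linarith
  · intro k hk
    have h1 := htend k hk
    have h2 := htend (k + 1) (by omega)
    have h3 : Filter.Tendsto (fun n => a (k + 1) n + (a (k + 1) n) ^ 2 + f k)
        Filter.atTop (nhds (T (k + 1) + T (k + 1) ^ 2 + f k)) :=
      (h2.add (h2.pow 2)).add tendsto_const_nhds
    have heq : ∀ᶠ n in Filter.atTop,
        a k n = a (k + 1) n + (a (k + 1) n) ^ 2 + f k := by
      filter_upwards [Filter.eventually_ge_atTop (k + 1)] with n hn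
      have h4 : n - k = (n - (k + 1)) + 1 := by omega
      have h5 : n - ((n - (k + 1)) + 1) = k := by omega
      simp only [ha, h4, back, h5]
    have h6 : Filter.Tendsto (fun n => a (k + 1) n + (a (k + 1) n) ^ 2 + f k)
        Filter.atTop (nhds (T k)) := h1.congr' heq
    have := tendsto_nhds_unique h6 h3
    linarith
end

section
/- Suppose the nonnegative sequence (S_k)_{k≥k₀} satisfies S_k - S_{k+1} = S_{k+1}² + 1/(4k²)·c_k with c_k ≥ 1 for all large k (i.e. S_k - S_{k+1} ≥ S_{k+1}² + 1/(4k²)). Then k·S_k → 1/2 as k → ∞. -/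
open Filter Finset

lemma no_uniform_gap (u : ℕ → ℝ) (c : ℝ) (hc : 0 < c) (N : ℕ)
    (h : ∀ k, N ≤ k → c / ((k : ℝ) + 1) ≤ u k - u (k + 1))
    (hb : ∀ M, -(1/2 : ℝ) ≤ u M) : False := by
  set g : ℕ → ℝ := fun n => ∑ i ∈ Finset.range n, (1 : ℝ) / ((i : ℝ) + 1) with hg
  have tele : ∀ M, N ≤ M → c * (g M - g N) ≤ u N - u M := by
    intro M hM
    induction M, hM using Nat.le_induction with
    | base => simp
    | succ M hM ih =>
      have h2 := h M hM
      have hgs : g (M + 1) = g M + 1 / ((M : ℝ) + 1) := by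
        rw [hg]; exact Finset.sum_range_succ _ M
      have e : c * (g (M + 1) - g N) = c * (g M - g N) + c / ((M : ℝ) + 1) := by
        rw [hgs]; ring
      linarith
  have hdiv : Tendsto g atTop atTop := by
    rw [hg]; exact Real.tendsto_sum_range_one_div_nat_succ_atTop
  obtain ⟨M, hM1, hM2⟩ :=
    ((hdiv.eventually_ge_atTop (g N + (u N + 1/2)/c + 1)).and (eventually_ge_atTop N)).exists
  have h3 := tele M hM2
  have h4 := hb M
  have hc' : c ≠ 0 := ne_of_gt hc
  have e3 : c * ((u N + 1/2)/c + 1) = u N + 1/2 + c := by field_simp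
  have h5 : (u N + 1/2)/c + 1 ≤ g M - g N := by linarith
  nlinarith [mul_le_mul_of_nonneg_left h5 hc.le]

/-- If a nonnegative sequence satisfies `S k - S (k+1) = S (k+1)² + f k` for large `k`,
where `1/(4x²) ≤ f x ≤ 1/x²`, then `k * S k → 1/2`. -/
theorem k_mul_S_tendsto_half (S : ℕ → ℝ) (hS0 : ∀ k, 0 ≤ S k)
    (f : ℝ → ℝ) (hf : ∀ x : ℝ, 1 ≤ x → 1 / (4 * x ^ 2) ≤ f x ∧ f x ≤ 1 / x ^ 2)
    (K : ℕ) (hK : 1 ≤ K)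
    (heq : ∀ k, K ≤ k → S k - S (k + 1) = S (k + 1) ^ 2 + f k) :
    Filter.Tendsto (fun k : ℕ => (k : ℝ) * S k) Filter.atTop (nhds (1 / 2)) := by
  set v : ℕ → ℝ := fun k => (k : ℝ) * S k - 1/2 with hv
  have hvk : ∀ n : ℕ, v n = (n : ℝ) * S n - 1/2 := fun n => by simp only [hv]
  have hb : ∀ M : ℕ, -(1/2 : ℝ) ≤ v M := by
    intro M
    have : 0 ≤ (M : ℝ) * S M := mul_nonneg (Nat.cast_nonneg M) (hS0 M)
    rw [hvk M]; linarith
  have KI : ∀ k : ℕ, K ≤ k →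
      (2*(k:ℝ)*v (k+1) - 1)^2 / (4*(k:ℝ)*((k:ℝ)+1)^2) ≤ v k - v (k+1) := by
    intro k hk
    have hk1 : (1:ℝ) ≤ (k:ℝ) := by exact_mod_cast le_trans hK hk
    have hkpos : (0:ℝ) < (k:ℝ) := lt_of_lt_of_le one_pos hk1
    have hfl : 1/(4*(k:ℝ)^2) ≤ f k := (hf (k:ℝ) hk1).1
    have hfl' : 1 ≤ f (k:ℝ) * (4*(k:ℝ)^2) := by
      rw [div_le_iff₀ (by positivity)] at hfl; exact hfl
    have h2' : (0:ℝ) ≤ 4*(k:ℝ)^2 * f (k:ℝ) - 1 := by nlinarith [hfl']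
    have hSk : S k = S (k+1) + S (k+1)^2 + f (k:ℝ) := by
      have := heq k hk; linarith
    have hvk1 : v (k+1) = ((k:ℝ)+1) * S (k+1) - 1/2 := by
      rw [hvk (k+1)]; push_cast; ring
    rw [hvk k, hvk1, hSk]
    rw [div_le_iff₀ (mul_pos (by linarith : (0:ℝ) < 4*(k:ℝ)) (pow_pos (by linarith) 2))]
    nlinarith [mul_nonneg (sq_nonneg ((k:ℝ)+1)) h2']
  have ANT : ∀ i j : ℕ, K ≤ i → i ≤ j → v j ≤ v i := by
    intro i j hKi hij
    induction j, hij using Nat.le_induction with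
    | base => exact le_refl _
    | succ j hij ih =>
      have h := KI j (le_trans hKi hij)
      have hnn : 0 ≤ (2*(j:ℝ)*v (j+1) - 1)^2 / (4*(j:ℝ)*((j:ℝ)+1)^2) := by positivity
      have h' : v (j+1) ≤ v j := sub_nonneg.mp (le_trans hnn h)
      exact le_trans h' ih
  have INC : ∀ ε : ℝ, 0 < ε → ∀ k : ℕ, K ≤ k → 1 ≤ ε * (k:ℝ) → ε ≤ |v (k+1)| →
      ε^2 / (16*((k:ℝ)+1)) ≤ v k - v (k+1) := by
    intro ε hε k hk hεk habs
    have hk1 : (1:ℝ) ≤ (k:ℝ) := by exact_mod_cast le_trans hK hk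
    refine le_trans ?_ (KI k hk)
    have h2 : |2*(k:ℝ)*v (k+1)| - |(1:ℝ)| ≤ |2*(k:ℝ)*v (k+1) - 1| :=
      abs_sub_abs_le_abs_sub _ _
    have h3 : |2*(k:ℝ)*v (k+1)| = 2*(k:ℝ)*|v (k+1)| := by
      rw [abs_mul, abs_of_nonneg (by positivity : (0:ℝ) ≤ 2*(k:ℝ))]
    have h5 : 2*(k:ℝ)*ε ≤ 2*(k:ℝ)*|v (k+1)| :=
      mul_le_mul_of_nonneg_left habs (by positivity)
    have h1 : (k:ℝ)*ε ≤ |2*(k:ℝ)*v (k+1) - 1| := by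
      have hek : (1:ℝ) ≤ (k:ℝ)*ε := by nlinarith [hεk]
      have : |(1:ℝ)| = 1 := abs_one
      nlinarith [h2, h3, h5]
    have h6 : ((k:ℝ)*ε)^2 ≤ (2*(k:ℝ)*v (k+1) - 1)^2 := by
      have := pow_le_pow_left₀ (by positivity) h1 2
      simpa [sq_abs] using this
    rw [div_le_div_iff₀ (by positivity) (mul_pos (by linarith : (0:ℝ) < 4*(k:ℝ)) (pow_pos (by linarith) 2))]
    have h9 : (0:ℝ) ≤ ε^2 * (k:ℝ) * ((k:ℝ)+1) := by positivity
    nlinarith [mul_le_mul_of_nonneg_right h6 (by positivity : (0:ℝ) ≤ 16*((k:ℝ)+1)), h9, hk1]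
  have hv0 : Filter.Tendsto v Filter.atTop (nhds 0) := by
    rw [Metric.tendsto_atTop]
    intro ε hε
    set N₀ := K + Nat.ceil (1/ε) with hN₀
    have hN₀K : K ≤ N₀ := Nat.le_add_right _ _
    have hN₀ε : ∀ k : ℕ, N₀ ≤ k → 1 ≤ ε * (k:ℝ) := by
      intro k hk
      have h1 : (1/ε : ℝ) ≤ (N₀ : ℝ) := by
        have hc := Nat.le_ceil (1/ε)
        have hc2 : ((Nat.ceil (1/ε) : ℕ) : ℝ) ≤ (N₀ : ℝ) := by
          exact_mod_cast Nat.le_add_left _ _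
        linarith
      have h2 : (N₀ : ℝ) ≤ (k : ℝ) := by exact_mod_cast hk
      have := mul_le_mul_of_nonneg_left (le_trans h1 h2) hε.le
      rw [show ε * (1/ε) = 1 by field_simp] at this
      exact this
    have claim1 : ∃ k₃, N₀ ≤ k₃ ∧ v k₃ < ε := by
      by_contra hcon
      push_neg at hcon
      refine no_uniform_gap v (ε^2/16) (by positivity) N₀ ?_ hb
      intro k hk
      have h1 : ε ≤ |v (k+1)| :=
        le_trans (hcon (k+1) (le_trans hk (Nat.le_succ k))) (le_abs_self _)
      have h2 := INC ε hε k (le_trans hN₀K hk) (hN₀ε k hk) h1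
      calc ε^2/16/((k:ℝ)+1) = ε^2/(16*((k:ℝ)+1)) := by rw [div_div]
        _ ≤ _ := h2
    obtain ⟨k₃, hk₃N, hk₃⟩ := claim1
    refine ⟨k₃, fun n hn => ?_⟩
    have hKn : K ≤ n := le_trans hN₀K (le_trans hk₃N hn)
    rw [Real.dist_eq, sub_zero, abs_lt]
    constructor
    · by_contra hcon
      push_neg at hcon
      refine no_uniform_gap v (ε^2/16) (by positivity) n ?_ hb
      intro k hk
      have hvk1' : v (k+1) ≤ -ε :=
        le_trans (ANT n (k+1) hKn (le_trans hk (Nat.le_succ k))) hcon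
      have h1 : ε ≤ |v (k+1)| := by
        rw [abs_of_nonpos (by linarith : v (k+1) ≤ 0)]
        linarith
      have h2 := INC ε hε k (le_trans hKn hk) (hN₀ε k (le_trans (le_trans hk₃N hn) hk)) h1
      calc ε^2/16/((k:ℝ)+1) = ε^2/(16*((k:ℝ)+1)) := by rw [div_div]
        _ ≤ _ := h2
    · exact lt_of_le_of_lt (ANT k₃ n (le_trans hN₀K hk₃N) hn) hk₃
  have hfun : (fun k : ℕ => (k : ℝ) * S k) = fun k => v k + 1/2 := by
    funext k; rw [hvk k]; ring
  rw [hfun]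
  have := hv0.add (tendsto_const_nhds : Filter.Tendsto (fun _ : ℕ => (1/2 : ℝ)) Filter.atTop (nhds (1/2)))
  simpa using this
end

section
/- Let f : [t₀,∞) → [0,∞) be continuous. If there exists a nonnegative sequence (S_k)_{k≥k₀} with S_k → 0 satisfying S_k - S_{k+1} ≥ S_k² + f(k) for all k ≥ k₀, and f is nonincreasing, then f is recursively integrable (via the linear interpolation g of the sequence). -/
/-!
Put `B x = S ⌊x⌋₊`. As `S` and `f` are nonincreasing from `k₀` on, the integral of `B² + f` over
`(m, ∞)` is bounded by `∑_{k ≥ m} (S k ^ 2 + f k) ≤ ∑_{k ≥ m} (S k - S (k + 1)) ≤ S m`, so `B` is a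
supersolution of the integral form `g x = ∫_{t > x} (g t ^ 2 + f t)` of the Riccati equation.
Picard iteration started at `0` then increases and stays below `B`; by dominated convergence its
limit solves the integral equation, and differentiating the tail integral gives `-g' = g² + f`.
-/

open MeasureTheory Set Filter Topology

theorem hasDerivWithinAt_integral_Ioi {h : ℝ → ℝ} {a x : ℝ} (hint : IntegrableOn h (Ioi a))
    (hx : a ≤ x) (hcont : ContinuousWithinAt h (Ici a) x) :
    HasDerivWithinAt (fun y => ∫ t in Ioi y, h t) (-h x) (Ici a) x := by
  -- `FTCFilter` has no instance for `𝓝[Ici a] x`, so differentiate within `Icc a (x + 1)` first.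
  have : Fact (x ∈ Icc a (x + 1)) := ⟨⟨hx, by linarith⟩⟩
  have hIcc : IntegrableOn h (Icc a (x + 1)) :=
    IntegrableOn.mono_set (by rwa [integrableOn_Ici_iff_integrableOn_Ioi]) Icc_subset_Ici_self
  have hprim : HasDerivWithinAt (fun y => ∫ t in a..y, h t) (h x) (Icc a (x + 1)) x :=
    intervalIntegral.integral_hasDerivWithinAt_right
      ((intervalIntegrable_iff_integrableOn_Ioc_of_le hx).2 (hint.mono_set Ioc_subset_Ioi_self))
      ⟨_, self_mem_nhdsWithin, hIcc.aestronglyMeasurable⟩ (hcont.mono Icc_subset_Ici_self)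
  have hIcc_mem : Icc a (x + 1) ∈ 𝓝[Ici a] x := by
    rw [← Ici_inter_Iic]
    exact inter_mem_nhdsWithin _ (Iic_mem_nhds (by linarith))
  have htail : EqOn (fun y => ∫ t in Ioi y, h t)
      (fun y => (∫ t in Ioi a, h t) - ∫ t in a..y, h t) (Ici a) := fun y hy => by
    dsimp only
    rw [← intervalIntegral.integral_Ioi_sub_Ioi hint hy, sub_sub_cancel]
  exact ((hprim.const_sub _).mono_of_mem_nhdsWithin hIcc_mem).congr htail (htail hx)

theorem RecInt.mono {t₀ t₁ : ℝ} {f : ℝ → ℝ} (h : RecInt t₁ f) (ht : t₀ ≤ t₁) : RecInt t₀ f :=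
  let ⟨t₂, ht₁₂, hg⟩ := h
  ⟨t₂, ht.trans ht₁₂, hg⟩

/-- The Picard map of the integral equation `u x = ∫_{t > x} (u t ^ 2 + f t)` on `[a, ∞)`, frozen
on `(-∞, a]` so that its values are continuous on all of `ℝ`. -/
noncomputable def riccatiPicard (f : ℝ → ℝ) (a : ℝ) (u : ℝ → ℝ) (x : ℝ) : ℝ :=
  ∫ t in Ioi (max x a), (u t ^ 2 + f t)

section RiccatiPicard

variable {f B u v : ℝ → ℝ} {a : ℝ}

theorem norm_sq_add_le_of_mem_Icc {y b c : ℝ} (hc : 0 ≤ c) (hy : y ∈ Icc 0 b) :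
    ‖y ^ 2 + c‖ ≤ b ^ 2 + c := by
  rw [Real.norm_of_nonneg (by positivity)]
  gcongr
  exacts [hy.1, hy.2]

theorem integrableOn_sq_add_of_mem_Icc (hf : AEStronglyMeasurable f (volume.restrict (Ioi a)))
    (hf0 : ∀ x ∈ Ici a, 0 ≤ f x) (hB : IntegrableOn (fun t => B t ^ 2 + f t) (Ioi a))
    (hu_meas : Measurable u) (hu : ∀ x ∈ Ici a, u x ∈ Icc 0 (B x)) :
    IntegrableOn (fun t => u t ^ 2 + f t) (Ioi a) :=
  hB.mono' ((hu_meas.pow_const 2).aestronglyMeasurable.add hf)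
    (ae_restrict_of_forall_mem measurableSet_Ioi fun t ht =>
      norm_sq_add_le_of_mem_Icc (hf0 t (Ioi_subset_Ici_self ht)) (hu t (Ioi_subset_Ici_self ht)))

theorem riccatiPicard_nonneg (hf0 : ∀ x ∈ Ici a, 0 ≤ f x) (x : ℝ) :
    0 ≤ riccatiPicard f a u x :=
  setIntegral_nonneg measurableSet_Ioi fun t ht =>
    add_nonneg (sq_nonneg _) (hf0 t (Ioi_subset_Ici (le_max_right x a) ht))

theorem riccatiPicard_le (hf0 : ∀ x ∈ Ici a, 0 ≤ f x)
    (hB : IntegrableOn (fun t => B t ^ 2 + f t) (Ioi a))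
    (hsuper : ∀ x ∈ Ici a, ∫ t in Ioi x, (B t ^ 2 + f t) ≤ B x)
    (hu : ∀ x ∈ Ici a, u x ∈ Icc 0 (B x)) {x : ℝ} (hx : x ∈ Ici a) :
    riccatiPicard f a u x ≤ B x := by
  rw [riccatiPicard, max_eq_left hx]
  refine le_trans (integral_mono_of_nonneg ?_ (hB.mono_set (Ioi_subset_Ioi hx)) ?_) (hsuper x hx)
  · exact ae_restrict_of_forall_mem measurableSet_Ioi fun t ht =>
      add_nonneg (sq_nonneg _) (hf0 t (Ioi_subset_Ici hx ht))
  · refine ae_restrict_of_forall_mem measurableSet_Ioi fun t ht => ?_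
    have ht := Ioi_subset_Ici hx ht
    dsimp only
    gcongr
    exacts [(hu t ht).1, (hu t ht).2]

theorem riccatiPicard_mono (hf : AEStronglyMeasurable f (volume.restrict (Ioi a)))
    (hf0 : ∀ x ∈ Ici a, 0 ≤ f x) (hB : IntegrableOn (fun t => B t ^ 2 + f t) (Ioi a))
    (hv_meas : Measurable v) (hv : ∀ x ∈ Ici a, v x ∈ Icc 0 (B x))
    (hu0 : ∀ x ∈ Ici a, 0 ≤ u x) (huv : ∀ x ∈ Ici a, u x ≤ v x) (x : ℝ) :
    riccatiPicard f a u x ≤ riccatiPicard f a v x := by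
  have hxa : Ioi (max x a) ⊆ Ici a := Ioi_subset_Ici (le_max_right x a)
  refine integral_mono_of_nonneg ?_ ((integrableOn_sq_add_of_mem_Icc hf hf0 hB hv_meas hv).mono_set
    (Ioi_subset_Ioi (le_max_right x a))) ?_
  · exact ae_restrict_of_forall_mem measurableSet_Ioi fun t ht =>
      add_nonneg (sq_nonneg _) (hf0 t (hxa ht))
  · refine ae_restrict_of_forall_mem measurableSet_Ioi fun t ht => ?_
    dsimp only
    gcongr
    exacts [hu0 t (hxa ht), huv t (hxa ht)]

theorem continuous_riccatiPicard (hf : AEStronglyMeasurable f (volume.restrict (Ioi a)))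
    (hf0 : ∀ x ∈ Ici a, 0 ≤ f x) (hB : IntegrableOn (fun t => B t ^ 2 + f t) (Ioi a))
    (hu_meas : Measurable u) (hu : ∀ x ∈ Ici a, u x ∈ Icc 0 (B x)) :
    Continuous (riccatiPicard f a u) :=
  (integrableOn_sq_add_of_mem_Icc hf hf0 hB hu_meas hu).continuousOn_Ici_primitive_Ioi
    |>.comp_continuous (continuous_id.max continuous_const) fun x => le_max_right x a

theorem mapsTo_riccatiPicard (hf : AEStronglyMeasurable f (volume.restrict (Ioi a)))
    (hf0 : ∀ x ∈ Ici a, 0 ≤ f x) (hB : IntegrableOn (fun t => B t ^ 2 + f t) (Ioi a))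
    (hsuper : ∀ x ∈ Ici a, ∫ t in Ioi x, (B t ^ 2 + f t) ≤ B x) :
    MapsTo (riccatiPicard f a) {u | Measurable u ∧ ∀ x ∈ Ici a, u x ∈ Icc 0 (B x)}
      {u | Measurable u ∧ ∀ x ∈ Ici a, u x ∈ Icc 0 (B x)} := fun _ ⟨hu_meas, hu⟩ =>
  ⟨(continuous_riccatiPicard hf hf0 hB hu_meas hu).measurable, fun _ hx =>
    ⟨riccatiPicard_nonneg hf0 _, riccatiPicard_le hf0 hB hsuper hu hx⟩⟩

theorem riccatiPicard_iterate_mem (hf : AEStronglyMeasurable f (volume.restrict (Ioi a)))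
    (hf0 : ∀ x ∈ Ici a, 0 ≤ f x) (hB : IntegrableOn (fun t => B t ^ 2 + f t) (Ioi a))
    (hsuper : ∀ x ∈ Ici a, ∫ t in Ioi x, (B t ^ 2 + f t) ≤ B x) (n : ℕ) :
    (riccatiPicard f a)^[n] 0 ∈ {u | Measurable u ∧ ∀ x ∈ Ici a, u x ∈ Icc 0 (B x)} := by
  have hB0 (x : ℝ) (hx : x ∈ Ici a) : 0 ≤ B x :=
    (setIntegral_nonneg measurableSet_Ioi fun t ht =>
      add_nonneg (sq_nonneg _) (hf0 t (Ioi_subset_Ici hx ht))).trans (hsuper x hx)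
  exact (mapsTo_riccatiPicard hf hf0 hB hsuper).iterate n
    ⟨measurable_const, fun x hx => ⟨le_rfl, hB0 x hx⟩⟩

theorem monotone_riccatiPicard_iterate_apply
    (hf : AEStronglyMeasurable f (volume.restrict (Ioi a)))
    (hf0 : ∀ x ∈ Ici a, 0 ≤ f x) (hB : IntegrableOn (fun t => B t ^ 2 + f t) (Ioi a))
    (hsuper : ∀ x ∈ Ici a, ∫ t in Ioi x, (B t ^ 2 + f t) ≤ B x) (x : ℝ) :
    Monotone fun n => (riccatiPicard f a)^[n] 0 x := by
  have hmem := riccatiPicard_iterate_mem hf hf0 hB hsuper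
  suffices h : ∀ n x, (riccatiPicard f a)^[n] 0 x ≤ (riccatiPicard f a)^[n + 1] 0 x from
    monotone_nat_of_le_succ fun n => h n x
  intro n
  induction n with
  | zero => exact riccatiPicard_nonneg hf0
  | succ n ih =>
    intro x
    rw [Function.iterate_succ_apply', Function.iterate_succ_apply' _ (n + 1)]
    exact riccatiPicard_mono hf hf0 hB (hmem (n + 1)).1 (hmem (n + 1)).2
      (fun y hy => ((hmem n).2 y hy).1) (fun y _ => ih y) x

theorem exists_eq_integral_Ioi_sq_add (hf : AEStronglyMeasurable f (volume.restrict (Ioi a)))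
    (hf0 : ∀ x ∈ Ici a, 0 ≤ f x) (hB : IntegrableOn (fun t => B t ^ 2 + f t) (Ioi a))
    (hsuper : ∀ x ∈ Ici a, ∫ t in Ioi x, (B t ^ 2 + f t) ≤ B x) :
    ∃ g : ℝ → ℝ, Measurable g ∧ (∀ x ∈ Ici a, g x ∈ Icc 0 (B x)) ∧
      ∀ x ∈ Ici a, g x = ∫ t in Ioi x, (g t ^ 2 + f t) := by
  set T := riccatiPicard f a
  have hmem := riccatiPicard_iterate_mem hf hf0 hB hsuper
  have hlim : ∀ x ∈ Ici a, Tendsto (fun n => T^[n] 0 x) atTop (𝓝 (⨆ n, T^[n] 0 x)) :=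
    fun x hx => tendsto_atTop_ciSup (monotone_riccatiPicard_iterate_apply hf hf0 hB hsuper x)
      ⟨B x, forall_mem_range.2 fun n => ((hmem n).2 x hx).2⟩
  refine ⟨fun x => ⨆ n, T^[n] 0 x, Measurable.iSup fun n => (hmem n).1, fun x hx =>
    isClosed_Icc.mem_of_tendsto (hlim x hx) (Eventually.of_forall fun n => (hmem n).2 x hx),
    fun x hx => tendsto_nhds_unique ((hlim x hx).comp (tendsto_add_atTop_nat 1)) ?_⟩
  simp only [Function.comp_def, Function.iterate_succ_apply', T, riccatiPicard,
    max_eq_left (mem_Ici.1 hx)]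
  refine tendsto_integral_of_dominated_convergence (fun t => B t ^ 2 + f t) (fun n => ?_)
    (hB.mono_set (Ioi_subset_Ioi hx)) (fun n => ?_) ?_
  · exact ((integrableOn_sq_add_of_mem_Icc hf hf0 hB (hmem n).1 (hmem n).2).mono_set
      (Ioi_subset_Ioi hx)).aestronglyMeasurable
  · exact ae_restrict_of_forall_mem measurableSet_Ioi fun t ht =>
      norm_sq_add_le_of_mem_Icc (hf0 t (Ioi_subset_Ici hx ht)) ((hmem n).2 t (Ioi_subset_Ici hx ht))
  · exact ae_restrict_of_forall_mem measurableSet_Ioi fun t ht =>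
      ((hlim t (Ioi_subset_Ici hx ht)).pow 2).add_const (f t)

end RiccatiPicard

theorem recInt_of_supersolution {f B : ℝ → ℝ} {a : ℝ} (hf : ContinuousOn f (Ici a))
    (hf0 : ∀ x ∈ Ici a, 0 ≤ f x) (hB : IntegrableOn (fun t => B t ^ 2 + f t) (Ioi a))
    (hsuper : ∀ x ∈ Ici a, ∫ t in Ioi x, (B t ^ 2 + f t) ≤ B x) :
    RecInt a f := by
  have hf_meas : AEStronglyMeasurable f (volume.restrict (Ioi a)) :=
    (hf.mono Ioi_subset_Ici_self).aestronglyMeasurable measurableSet_Ioi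
  obtain ⟨g, hg_meas, hg, hfix⟩ := exists_eq_integral_Ioi_sq_add hf_meas hf0 hB hsuper
  have hint := integrableOn_sq_add_of_mem_Icc hf_meas hf0 hB hg_meas hg
  have hg_cont : ContinuousOn g (Ici a) := hint.continuousOn_Ici_primitive_Ioi.congr hfix
  refine ⟨a, le_rfl, g, fun x hx => (hg x hx).1, fun x hx => ?_⟩
  exact (hasDerivWithinAt_integral_Ioi hint hx ((hg_cont.pow 2).add hf x hx)).congr hfix
    (hfix x hx)

section Sequence

variable {f : ℝ → ℝ} {S : ℕ → ℝ} {k₀ : ℕ}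

theorem sum_range_sq_add_le (hS0 : ∀ k, k₀ ≤ k → 0 ≤ S k)
    (hS : ∀ k, k₀ ≤ k → S k ^ 2 + f k ≤ S k - S (k + 1)) {m : ℕ} (hm : k₀ ≤ m) (N : ℕ) :
    ∑ i ∈ Finset.range N, (S (i + m) ^ 2 + f ↑(i + m)) ≤ S m := calc
  _ ≤ ∑ i ∈ Finset.range N, (S (i + m) - S (i + 1 + m)) :=
    Finset.sum_le_sum fun i _ => by simpa only [add_right_comm] using hS (i + m) (by omega)
  _ = S m - S (N + m) := by rw [Finset.sum_range_sub' (fun i => S (i + m))]; simp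
  _ ≤ S m := sub_le_self _ (hS0 _ (by omega))

theorem antitoneOn_floor_sq_add (hf0 : ∀ x ∈ Ici (k₀ : ℝ), 0 ≤ f x)
    (hfm : AntitoneOn f (Ici (k₀ : ℝ))) (hS0 : ∀ k, k₀ ≤ k → 0 ≤ S k)
    (hS : ∀ k, k₀ ≤ k → S k ^ 2 + f k ≤ S k - S (k + 1)) :
    AntitoneOn (fun x => S ⌊x⌋₊ ^ 2 + f x) (Ici (k₀ : ℝ)) := by
  have hS_anti : AntitoneOn S (Ici k₀) := antitoneOn_nat_Ici_of_succ_le fun k hk => by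
    nlinarith [hS k hk, hf0 k (mem_Ici.2 (Nat.cast_le.2 hk)), sq_nonneg (S k)]
  intro x hx y hy hxy
  have hkx : k₀ ≤ ⌊x⌋₊ := Nat.le_floor hx
  have hky : k₀ ≤ ⌊y⌋₊ := Nat.le_floor hy
  have hSxy : S ⌊y⌋₊ ≤ S ⌊x⌋₊ := hS_anti hkx hky (Nat.floor_le_floor hxy)
  dsimp only
  gcongr
  exacts [hS0 _ hky, hfm hx hy hxy]

theorem integrableOn_Ioi_floor_sq_add_and_integral_le (hf0 : ∀ x ∈ Ici (k₀ : ℝ), 0 ≤ f x)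
    (hfm : AntitoneOn f (Ici (k₀ : ℝ))) (hS0 : ∀ k, k₀ ≤ k → 0 ≤ S k)
    (hS : ∀ k, k₀ ≤ k → S k ^ 2 + f k ≤ S k - S (k + 1)) {m : ℕ} (hm : k₀ ≤ m) :
    IntegrableOn (fun x => S ⌊x⌋₊ ^ 2 + f x) (Ioi (m : ℝ)) ∧
      ∫ x in Ioi (m : ℝ), (S ⌊x⌋₊ ^ 2 + f x) ≤ S m := by
  have hanti := (antitoneOn_floor_sq_add hf0 hfm hS0 hS).mono
    (Ici_subset_Ici.2 (Nat.cast_le.2 hm))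
  have hnonneg : ∀ t ∈ Ioi (m : ℝ), 0 ≤ S ⌊t⌋₊ ^ 2 + f t := fun t ht =>
    add_nonneg (sq_nonneg _) (hf0 t (Ioi_subset_Ici (Nat.cast_le.2 hm) ht))
  have hterm (n : ℕ) : S ⌊((n + m : ℕ) : ℝ)⌋₊ ^ 2 + f ↑(n + m) = S (n + m) ^ 2 + f ↑(n + m) := by
    rw [Nat.floor_natCast]
  have hterm_nonneg (n : ℕ) : 0 ≤ S (n + m) ^ 2 + f ↑(n + m) :=
    add_nonneg (sq_nonneg _) (hf0 _ (mem_Ici.2 (Nat.cast_le.2 (by omega))))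
  have hsum := sum_range_sq_add_le hS0 hS hm
  have hsummable : Summable fun n : ℕ => S ⌊((n + m : ℕ) : ℝ)⌋₊ ^ 2 + f ↑(n + m) := by
    simp only [hterm]
    exact summable_of_sum_range_le hterm_nonneg hsum
  refine ⟨hanti.integrableOn_Ioi_of_summable_comp_add hsummable hnonneg, ?_⟩
  refine (hanti.integral_le_tsum_comp_add m ((summable_nat_add_iff m).1 hsummable) hnonneg).trans ?_
  simp only [hterm]
  exact Real.tsum_le_of_sum_range_le hterm_nonneg hsum

theorem integral_Ioi_floor_sq_add_le (hf0 : ∀ x ∈ Ici (k₀ : ℝ), 0 ≤ f x)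
    (hfm : AntitoneOn f (Ici (k₀ : ℝ))) (hS0 : ∀ k, k₀ ≤ k → 0 ≤ S k)
    (hS : ∀ k, k₀ ≤ k → S k ^ 2 + f k ≤ S k - S (k + 1)) {x : ℝ} (hx : x ∈ Ici (k₀ : ℝ)) :
    ∫ t in Ioi x, (S ⌊t⌋₊ ^ 2 + f t) ≤ S ⌊x⌋₊ := by
  have hkx : k₀ ≤ ⌊x⌋₊ := Nat.le_floor hx
  obtain ⟨hint, hle⟩ := integrableOn_Ioi_floor_sq_add_and_integral_le hf0 hfm hS0 hS hkx
  refine le_trans (setIntegral_mono_set hint ?_ (Ioi_subset_Ioi (Nat.floor_le ?_)).eventuallyLE) hle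
  · exact ae_restrict_of_forall_mem measurableSet_Ioi fun t ht =>
      add_nonneg (sq_nonneg _) (hf0 t (Ioi_subset_Ici (Nat.cast_le.2 hkx) ht))
  · exact (Nat.cast_nonneg k₀).trans hx

end Sequence

theorem recInt_of_sequence_general (t₀ : ℝ) (f : ℝ → ℝ)
    (hfc : ContinuousOn f (Set.Ici t₀)) (hfm : AntitoneOn f (Set.Ici t₀))
    (hf0 : ∀ x, t₀ ≤ x → 0 ≤ f x)
    (k₀ : ℕ) (hk₀ : t₀ ≤ (k₀ : ℝ)) (S : ℕ → ℝ)
    (hS0 : ∀ k, k₀ ≤ k → 0 ≤ S k)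
    (hS : ∀ k, k₀ ≤ k → S k ^ 2 + f k ≤ S k - S (k + 1)) :
    RecInt t₀ f := by
  have hsub : Ici (k₀ : ℝ) ⊆ Ici t₀ := Ici_subset_Ici.2 hk₀
  have hf0' : ∀ x ∈ Ici (k₀ : ℝ), 0 ≤ f x := fun x hx => hf0 x (hsub hx)
  have hfm' := hfm.mono hsub
  refine (recInt_of_supersolution (hfc.mono hsub) hf0' (B := fun x => S ⌊x⌋₊)
    (integrableOn_Ioi_floor_sq_add_and_integral_le hf0' hfm' hS0 hS le_rfl).1
    fun x hx => integral_Ioi_floor_sq_add_le hf0' hfm' hS0 hS hx).mono hk₀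

/-- (C1) with `t = 0` implies (A): a nonnegative sequence tending to `0` with
`S k - S (k+1) ≥ S k² + f k` yields recursive integrability of `f`. -/
theorem recInt_of_sequence (t₀ : ℝ) (f : ℝ → ℝ)
    (hfc : ContinuousOn f (Set.Ici t₀)) (hfm : AntitoneOn f (Set.Ici t₀))
    (hf0 : ∀ x, t₀ ≤ x → 0 ≤ f x)
    (k₀ : ℕ) (hk₀ : t₀ ≤ (k₀ : ℝ)) (S : ℕ → ℝ)
    (hS0 : ∀ k, k₀ ≤ k → 0 ≤ S k)
    (hlim : Filter.Tendsto S Filter.atTop (nhds 0))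
    (hS : ∀ k, k₀ ≤ k → S k ^ 2 + f k ≤ S k - S (k + 1)) :
    RecInt t₀ f :=
  recInt_of_sequence_general t₀ f hfc hfm hf0 k₀ hk₀ S hS0 hS
end

section
/- For every d ≥ 1, ω_d(H_min) = 2: the infimum over x ∈ ℝ^d \ ℚ^d of the exponent of irrationality with respect to the height H_min(p₁/q₁,…,p_d/q_d) = min(q₁,…,q_d) (fractions in lowest terms) equals 2. -/
/-!
If some coordinate `ξ` of `x` is irrational, Dirichlet's theorem gives rationals `p/q` arbitrarily
close to `ξ` with `|ξ - p/q| < q⁻²`; the other coordinates can be approximated to within the same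
bound by arbitrary rationals, and `H_min` of the resulting point is at most `q`. Hence
`‖x - r‖ < H_min(r)⁻²` along a sequence `r → x`.

Conversely, take `x = (√2, …, √2)`. Liouville's inequality `|√2 - p/q| ≥ c q⁻²`, applied at a
coordinate realising `H_min(r)`, shows that `‖x - r‖ < H_min(r)^(-α)` with `α > 2` forces `H_min(r)`
to stay bounded, so `‖x - r‖ ≥ c H_min(r)⁻²` stays bounded away from `0`.
-/

open Filter Topology Polynomial

theorem exists_pos_le_abs_sub_rat_of_irrational_root {ξ : ℝ} (hξ : Irrational ξ) {f : ℤ[X]}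
    (hf0 : f ≠ 0) (hf : eval ξ (map (algebraMap ℤ ℝ) f) = 0) :
    ∃ c > 0, ∀ q : ℚ, c / (q.den : ℝ) ^ f.natDegree ≤ |ξ - q| := by
  obtain ⟨A, hA, hbound⟩ := Liouville.exists_pos_real_of_irrational_root hξ hf0 hf
  refine ⟨A⁻¹, inv_pos.mpr hA, fun q => ?_⟩
  have hden : ((q.den - 1 : ℕ) : ℝ) + 1 = q.den := by
    rw [Nat.cast_sub q.pos, Nat.cast_one, sub_add_cancel]
  have h := hbound q.num (q.den - 1)
  rw [hden, ← Rat.cast_def] at h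
  rw [div_le_iff₀ (by positivity), inv_le_iff_one_le_mul₀ hA]
  linarith

theorem exists_pos_le_abs_sub_rat_sqrt_two :
    ∃ c > 0, ∀ q : ℚ, c / (q.den : ℝ) ^ 2 ≤ |√2 - q| := by
  have hdeg : (X ^ 2 - C 2 : ℤ[X]).natDegree = 2 := by compute_degree!
  have hf0 : (X ^ 2 - C 2 : ℤ[X]) ≠ 0 := ne_zero_of_natDegree_gt (n := 0) (by rw [hdeg]; norm_num)
  have h := exists_pos_le_abs_sub_rat_of_irrational_root irrational_sqrt_two hf0 (by simp)
  rwa [hdeg] at h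

theorem exists_pos_le_abs_sub_of_abs_sub_lt_den_rpow {ξ c : ℝ} {n : ℕ} (hc : 0 < c)
    (hξ : ∀ q : ℚ, c / (q.den : ℝ) ^ n ≤ |ξ - q|) {α : ℝ} (hα : n < α) :
    ∃ δ > 0, ∀ q : ℚ, |ξ - q| < (q.den : ℝ) ^ (-α) → δ ≤ |ξ - q| := by
  -- `c / qⁿ < q^(-α)` gives `c < q^(-(α - n))`, hence `c^(n / (α - n)) ≤ q^(-n)`.
  refine ⟨c * c ^ ((n : ℝ) / (α - n)), by positivity, fun q hq => ?_⟩
  have hD : (0 : ℝ) < q.den := by exact_mod_cast q.pos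
  have hsplit : (q.den : ℝ) ^ (-α) = (q.den : ℝ) ^ (-(α - n)) / (q.den : ℝ) ^ n := by
    rw [Real.rpow_neg hD.le, Real.rpow_neg hD.le, Real.rpow_sub hD, Real.rpow_natCast]
    field_simp
  have hlt : c < (q.den : ℝ) ^ (-(α - n)) := by
    have := (hξ q).trans_lt (hsplit ▸ hq)
    rwa [div_lt_div_iff_of_pos_right (by positivity)] at this
  have hpow : c ^ ((n : ℝ) / (α - n)) ≤ ((q.den : ℝ) ^ n)⁻¹ := by
    have := Real.rpow_le_rpow hc.le hlt.le (by have := sub_pos.mpr hα; positivity :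
      (0 : ℝ) ≤ n / (α - n))
    rwa [← Real.rpow_mul hD.le, neg_mul, mul_div_cancel₀ _ (sub_pos.mpr hα).ne',
      Real.rpow_neg hD.le, Real.rpow_natCast] at this
  calc c * c ^ ((n : ℝ) / (α - n)) ≤ c * ((q.den : ℝ) ^ n)⁻¹ := by gcongr
    _ = c / (q.den : ℝ) ^ n := by rw [div_eq_mul_inv]
    _ ≤ |ξ - q| := hξ q

section RatPoints

variable {ι : Type*}

theorem exists_rat_point_dist_lt_and_lt_one_div_den_sq [Fintype ι] {x : ι → ℝ} {i₀ : ι}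
    (hx : Irrational (x i₀)) {ε : ℝ} (hε : 0 < ε) :
    ∃ r : ι → ℚ, dist x (fun i => (r i : ℝ)) < ε ∧
      dist x (fun i => (r i : ℝ)) < 1 / ((r i₀).den : ℝ) ^ 2 := by
  classical
  obtain ⟨q₀, hq₀⟩ := exists_rat_near (x i₀) hε
  obtain ⟨q, hq_den, hq_near⟩ := Real.exists_rat_abs_sub_lt_and_lt_of_irrational hx q₀
  set δ := min ε (1 / (q.den : ℝ) ^ 2)
  have hδ : 0 < δ := lt_min hε (by positivity)
  choose f hf using fun i => exists_rat_near (x i) hδ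
  refine ⟨Function.update f i₀ q, ?_⟩
  have hdist : dist x (fun i => (Function.update f i₀ q i : ℝ)) < δ := by
    refine (dist_pi_lt_iff hδ).2 fun i => ?_
    rw [Real.dist_eq]
    rcases eq_or_ne i i₀ with rfl | hi
    · simp only [Function.update_self]
      exact lt_min (hq_near.trans hq₀) hq_den
    · simp only [Function.update_of_ne hi]
      exact hf i
  simpa using lt_min_iff.1 hdist

theorem exists_seq_rat_tendsto_dist_lt_iInf_den_rpow [Fintype ι] {x : ι → ℝ} {i₀ : ι}
    (hx : Irrational (x i₀)) {α : ℝ} (hα : α ≤ 2) :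
    ∃ r : ℕ → ι → ℚ, Tendsto (fun n i => (r n i : ℝ)) atTop (𝓝 x) ∧
      ∀ n, dist x (fun i => (r n i : ℝ)) < ((⨅ i, (r n i).den : ℕ) : ℝ) ^ (-α) := by
  have : Nonempty ι := ⟨i₀⟩
  choose r hr_near hr_den using fun n : ℕ =>
    exists_rat_point_dist_lt_and_lt_one_div_den_sq hx (Nat.one_div_pos_of_nat (n := n))
  refine ⟨r, ?_, fun n => (hr_den n).trans_le ?_⟩
  · refine tendsto_iff_dist_tendsto_zero.2 <|
      squeeze_zero (fun _ => dist_nonneg) (fun n => ?_) tendsto_one_div_add_atTop_nhds_zero_nat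
    rw [dist_comm]
    exact (hr_near n).le
  · set H := ⨅ i, (r n i).den
    have hH : (1 : ℝ) ≤ H := Nat.one_le_cast.2 (le_ciInf fun i => (r n i).pos)
    have hH_le : (H : ℝ) ≤ (r n i₀).den := Nat.cast_le.2 (ciInf_le' _ i₀)
    calc 1 / ((r n i₀).den : ℝ) ^ 2 ≤ 1 / (H : ℝ) ^ 2 := by gcongr
      _ = (H : ℝ) ^ (-2 : ℝ) := by rw [Real.rpow_neg (by linarith), one_div, Real.rpow_two]
      _ ≤ (H : ℝ) ^ (-α) := Real.rpow_le_rpow_of_exponent_le hH (by linarith)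

theorem not_exists_seq_rat_tendsto_const_dist_lt_iInf_den_rpow [Fintype ι] [Nonempty ι] {ξ c : ℝ} {n : ℕ}
    (hc : 0 < c) (hξ : ∀ q : ℚ, c / (q.den : ℝ) ^ n ≤ |ξ - q|) {α : ℝ} (hα : n < α) :
    ¬ ∃ r : ℕ → ι → ℚ, Tendsto (fun n i => (r n i : ℝ)) atTop (𝓝 fun _ => ξ) ∧
      ∀ n, dist (fun _ => ξ) (fun i => (r n i : ℝ)) < ((⨅ i, (r n i).den : ℕ) : ℝ) ^ (-α) := by
  rintro ⟨r, hr_tendsto, hr_dist⟩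
  obtain ⟨δ, hδ, hξδ⟩ := exists_pos_le_abs_sub_of_abs_sub_lt_den_rpow hc hξ hα
  obtain ⟨m, hm⟩ := (hr_tendsto.eventually (Metric.ball_mem_nhds _ hδ)).exists
  obtain ⟨i₀, hi₀ : (r m i₀).den = ⨅ i, (r m i).den⟩ := ciInf_mem fun i => (r m i).den
  have hcoord : |ξ - r m i₀| ≤ dist (fun _ => ξ) (fun i => (r m i : ℝ)) := by
    simpa only [Real.dist_eq] using dist_le_pi_dist (fun _ => ξ) (fun i => (r m i : ℝ)) i₀
  have hgood : |ξ - r m i₀| < ((r m i₀).den : ℝ) ^ (-α) := by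
    rw [hi₀]
    exact hcoord.trans_lt (hr_dist m)
  rw [dist_comm] at hm
  exact (hξδ _ hgood).trans hcoord |>.not_gt hm

end RatPoints

/-- `ω_d(H_min) = 2`: (i) for every `x ∈ ℝ^d \ ℚ^d` and every `0 ≤ α < 2` there is a
sequence of rational points tending to `x` with `‖x - r‖ < H_min(r)^(-α)`; (ii) for every
`α > 2` there is some `x ∈ ℝ^d \ ℚ^d` admitting no such sequence. -/
theorem exponent_of_irrationality_Hmin (d : ℕ) (hd : 1 ≤ d)
    (Hmin : (Fin d → ℚ) → ℕ) (hH : ∀ r : Fin d → ℚ, Hmin r = ⨅ i, (r i).den) :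
    (∀ x : Fin d → ℝ, (¬ ∀ i, ∃ q : ℚ, x i = (q : ℝ)) →
      ∀ α : ℝ, 0 ≤ α → α < 2 →
        ∃ r : ℕ → (Fin d → ℚ),
          Tendsto (fun n => fun i => ((r n i : ℝ))) atTop (nhds x) ∧
          ∀ n, dist x (fun i => ((r n i : ℝ))) < (Hmin (r n) : ℝ) ^ (-α)) ∧
    (∀ α : ℝ, 2 < α →
      ∃ x : Fin d → ℝ, (¬ ∀ i, ∃ q : ℚ, x i = (q : ℝ)) ∧
        ¬ ∃ r : ℕ → (Fin d → ℚ),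
          Tendsto (fun n => fun i => ((r n i : ℝ))) atTop (nhds x) ∧
          ∀ n, dist x (fun i => ((r n i : ℝ))) < (Hmin (r n) : ℝ) ^ (-α)) := by
  have : Nonempty (Fin d) := ⟨⟨0, hd⟩⟩
  simp only [hH]
  refine ⟨fun x hx α _ hα => ?_, fun α hα => ?_⟩
  · obtain ⟨i₀, hi₀⟩ := not_forall.1 hx
    exact exists_seq_rat_tendsto_dist_lt_iInf_den_rpow (fun ⟨q, hq⟩ => hi₀ ⟨q, hq.symm⟩) hα.le
  · obtain ⟨c, hc, hsqrt⟩ := exists_pos_le_abs_sub_rat_sqrt_two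
    refine ⟨fun _ => √2, fun h => ?_,
      not_exists_seq_rat_tendsto_const_dist_lt_iInf_den_rpow hc hsqrt (by exact_mod_cast hα)⟩
    obtain ⟨q, hq⟩ := h ⟨0, hd⟩
    exact irrational_sqrt_two.ne_rat q hq
end

section
/- For every ε > 0 and every C > 1/ε, if g₁ : [t₁,∞) → [0,∞) is a recursive antiderivative of a continuous f₁ with x·g₁(x) → 1/2 as x → ∞, then g(x) = g₁(x) + C/x^{1+ε} satisfies -g'(x) ≥ g(x)² + f₁(x) + 1/x^{2+ε} for all sufficiently large x; consequently f₁ + x^{-(2+ε)} is recursively integrable. -/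
/-!
For `g = g₁ + C x^{-(1+ε)}` one computes
`-g' - g² - f₁ = x^{-(2+ε)} (C(1+ε) - 2C·x g₁(x) - C² x^{-ε})`, and the bracket tends to
`Cε > 1`, so eventually `g` is a nonnegative strict subsolution of `y' = -(y² + F)` for
`F = f₁ + x^{-(2+ε)}`. The solution of this Riccati equation starting at `g(t₂)` stays above
`g ≥ 0` and grows at most as fast as `∫ |F|`, so it cannot blow up and exists on `[t₂, ∞)`.
-/

open Set Filter Topology Metric
open scoped NNReal

theorem lipschitzOnWith_neg_sq_add_const (N : ℝ≥0) (q : ℝ) :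
    LipschitzOnWith (2 * N) (fun y : ℝ => -(y ^ 2 + q)) (closedBall 0 N) := by
  refine LipschitzOnWith.of_dist_le_mul fun y hy z hz => ?_
  rw [mem_closedBall_zero_iff, Real.norm_eq_abs] at hy hz
  have hyz : |y + z| ≤ 2 * N := (abs_add_le y z).trans (by linarith)
  calc dist (-(y ^ 2 + q)) (-(z ^ 2 + q)) = |y + z| * dist y z := by
        rw [Real.dist_eq, Real.dist_eq, ← abs_mul, ← abs_neg]; congr 1; ring
    _ ≤ 2 * N * dist y z := by gcongr

theorem exists_forall_mem_Icc_hasDerivWithinAt_of_lipschitzWith_of_norm_le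
    {E : Type*} [NormedAddCommGroup E] [NormedSpace ℝ E] [CompleteSpace E]
    {f : ℝ → E → E} {a b : ℝ} {K L : ℝ≥0} (hab : a ≤ b)
    (hlip : ∀ t ∈ Icc a b, LipschitzWith K (f t))
    (hcont : ∀ x, ContinuousOn (f · x) (Icc a b))
    (hbound : ∀ t ∈ Icc a b, ∀ x, ‖f t x‖ ≤ L) (x₀ : E) :
    ∃ α : ℝ → E, α a = x₀ ∧ ∀ t ∈ Icc a b, HasDerivWithinAt α (f t (α t)) (Icc a b) t := by
  have hpl : IsPicardLindelof f ⟨a, left_mem_Icc.2 hab⟩ x₀ (L * (b - a)).toNNReal 0 L K :=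
    { lipschitzOnWith := fun t ht => (hlip t ht).lipschitzOnWith
      continuousOn := fun x _ => hcont x
      norm_le := fun t ht x _ => hbound t ht x
      mul_max_le := by
        rw [max_eq_left (by simpa using hab), Real.coe_toNNReal _ (by positivity)]
        simp }
  exact hpl.exists_eq_forall_mem_Icc_hasDerivWithinAt₀

theorem riccati_eqOn_Icc {F h₁ h₂ : ℝ → ℝ} {a b : ℝ}
    (h₁' : ∀ x ∈ Icc a b, HasDerivWithinAt h₁ (-(h₁ x ^ 2 + F x)) (Icc a b) x)
    (h₂' : ∀ x ∈ Icc a b, HasDerivWithinAt h₂ (-(h₂ x ^ 2 + F x)) (Icc a b) x)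
    (ha : h₁ a = h₂ a) : EqOn h₁ h₂ (Icc a b) := by
  have hc₁ : ContinuousOn h₁ (Icc a b) := fun x hx => (h₁' x hx).continuousWithinAt
  have hc₂ : ContinuousOn h₂ (Icc a b) := fun x hx => (h₂' x hx).continuousWithinAt
  obtain ⟨N₁, hN₁⟩ := isCompact_Icc.exists_bound_of_continuousOn hc₁
  obtain ⟨N₂, hN₂⟩ := isCompact_Icc.exists_bound_of_continuousOn hc₂
  set N : ℝ≥0 := N₁.toNNReal ⊔ N₂.toNNReal
  have hmem : ∀ t ∈ Ico a b, h₁ t ∈ closedBall 0 (N : ℝ) ∧ h₂ t ∈ closedBall 0 (N : ℝ) := by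
    intro t ht
    have ht' := Ico_subset_Icc_self ht
    simp only [mem_closedBall_zero_iff, N, NNReal.coe_max]
    exact ⟨(hN₁ t ht').trans ((Real.le_coe_toNNReal N₁).trans (le_max_left _ _)),
      (hN₂ t ht').trans ((Real.le_coe_toNNReal N₂).trans (le_max_right _ _))⟩
  have hright : ∀ h : ℝ → ℝ, (∀ x ∈ Icc a b, HasDerivWithinAt h (-(h x ^ 2 + F x)) (Icc a b) x) →
      ∀ t ∈ Ico a b, HasDerivWithinAt h (-(h t ^ 2 + F t)) (Ici t) t := fun h h' t ht =>
    (h' t (Ico_subset_Icc_self ht)).mono_of_mem_nhdsWithin (Icc_mem_nhdsGE_of_mem ht)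
  exact ODE_solution_unique_of_mem_Icc_right (v := fun t y => -(y ^ 2 + F t))
    (fun t _ => lipschitzOnWith_neg_sq_add_const N (F t)) hc₁ (hright h₁ h₁')
    (fun t ht => (hmem t ht).1) hc₂ (hright h₂ h₂') (fun t ht => (hmem t ht).2) ha

theorem exists_riccati_solution_Icc_ge_of_strict_subsolution {F w W : ℝ → ℝ} {a b : ℝ}
    (hab : a ≤ b) (hF : ContinuousOn F (Icc a b)) (hw0 : ∀ x ∈ Icc a b, 0 ≤ w x)
    (hw : ContinuousOn w (Icc a b)) (hw' : ∀ x ∈ Ico a b, HasDerivWithinAt w (W x) (Ici x) x)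
    (hsub : ∀ x ∈ Ico a b, W x < -(w x ^ 2 + F x)) :
    ∃ h : ℝ → ℝ, h a = w a ∧
      ∀ x ∈ Icc a b, w x ≤ h x ∧ HasDerivWithinAt h (-(h x ^ 2 + F x)) (Icc a b) x := by
  obtain ⟨K, hK⟩ := isCompact_Icc.exists_bound_of_continuousOn hF
  have hK0 : 0 ≤ K := (norm_nonneg _).trans (hK a (left_mem_Icc.2 hab))
  have hwa := hw0 a (left_mem_Icc.2 hab)
  set M : ℝ≥0 := ⟨w a + K * (b - a), by have := sub_nonneg.2 hab; positivity⟩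
  -- Truncating `y` to `[0, M]` makes the field globally Lipschitz and bounded; the a priori
  -- bounds `0 ≤ w ≤ h ≤ M` then show that the truncation never acts.
  set c : ℝ → ℝ := fun y => projIcc 0 (M : ℝ) M.2 y
  have hc : ∀ y, c y ∈ closedBall 0 (M : ℝ) := fun y => by
    have := (projIcc 0 (M : ℝ) M.2 y).2
    rw [mem_closedBall_zero_iff, Real.norm_eq_abs, abs_of_nonneg this.1]
    exact this.2
  have hc_eq : ∀ y ∈ Icc 0 (M : ℝ), c y = y := fun y hy =>
    congrArg Subtype.val (projIcc_of_mem _ hy)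
  have hc_lip : LipschitzWith 1 c := by
    have h := (LipschitzWith.subtype_val _).comp (LipschitzWith.projIcc M.2)
    rw [one_mul] at h
    exact h
  obtain ⟨h, ha, hh⟩ := exists_forall_mem_Icc_hasDerivWithinAt_of_lipschitzWith_of_norm_le
    (f := fun t y => -(c y ^ 2 + F t)) (K := 2 * M * 1) (L := ((M : ℝ) ^ 2 + K).toNNReal) hab
    (fun t _ => lipschitzOnWith_univ.1 <|
      (lipschitzOnWith_neg_sq_add_const M (F t)).comp hc_lip.lipschitzOnWith fun y _ => hc y)
    (fun y => (continuousOn_const.add hF).neg)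
    (fun t ht y => by
      rw [norm_neg, Real.coe_toNNReal _ (by positivity)]
      refine (norm_add_le _ _).trans (add_le_add ?_ (hK t ht))
      rw [norm_pow]
      exact pow_le_pow_left₀ (norm_nonneg _) (mem_closedBall_zero_iff.1 (hc y)) 2)
    (w a)
  have hh_cont : ContinuousOn h (Icc a b) := fun x hx => (hh x hx).continuousWithinAt
  have hh' : ∀ x ∈ Ico a b, HasDerivWithinAt h (-(c (h x) ^ 2 + F x)) (Ici x) x := fun x hx =>
    (hh x (Ico_subset_Icc_self hx)).mono_of_mem_nhdsWithin (Icc_mem_nhdsGE_of_mem hx)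
  have hle_M : ∀ x ∈ Icc a b, h x ≤ M := by
    have hB : ∀ x, HasDerivAt (fun x => w a + K * (x - a)) K x := fun x => by
      simpa using (((hasDerivAt_id x).sub_const a).const_mul K).const_add (w a)
    have hgrowth := image_le_of_deriv_right_le_deriv_boundary hh_cont hh' (by simp [ha])
      (by fun_prop) (fun x _ => (hB x).hasDerivWithinAt) fun x hx => by
        have := hK x (Ico_subset_Icc_self hx)
        rw [Real.norm_eq_abs] at this
        nlinarith [neg_abs_le (F x), sq_nonneg (c (h x))]
    exact fun x hx => (hgrowth hx).trans
      (show w a + K * (x - a) ≤ w a + K * (b - a) by gcongr; exact hx.2)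
  have hw_le : ∀ x ∈ Icc a b, w x ≤ h x :=
    image_le_of_deriv_right_lt_deriv_boundary' hw hw' ha.ge hh_cont hh' fun x hx hwh => by
      rw [← hwh, hc_eq _ ⟨hw0 x (Ico_subset_Icc_self hx), hwh ▸ hle_M x (Ico_subset_Icc_self hx)⟩]
      exact hsub x hx
  refine ⟨h, ha, fun x hx => ⟨hw_le x hx, ?_⟩⟩
  have := hh x hx
  rwa [hc_eq _ ⟨(hw0 x hx).trans (hw_le x hx), hle_M x hx⟩] at this

theorem exists_forall_hasDerivWithinAt_Ici_of_forall_Icc_s19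
    {E : Type*} [NormedAddCommGroup E] [NormedSpace ℝ E] {v : ℝ → E → E} {t₀ : ℝ}
    {h : ℝ → ℝ → E}
    (hh : ∀ T, ∀ x ∈ Icc t₀ T, HasDerivWithinAt (h T) (v x (h T x)) (Icc t₀ T) x)
    (hcoh : ∀ T T', ∀ x ∈ Icc t₀ (min T T'), h T x = h T' x) :
    ∃ g : ℝ → E, (∀ T, EqOn g (h T) (Icc t₀ T)) ∧
      ∀ x, t₀ ≤ x → HasDerivWithinAt g (v x (g x)) (Ici t₀) x := by
  have hg : ∀ T, EqOn (fun y => h (y + 1) y) (h T) (Icc t₀ T) := fun T y hy =>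
    hcoh _ _ y ⟨hy.1, le_min (by linarith) hy.2⟩
  refine ⟨fun y => h (y + 1) y, hg, fun x hx => ?_⟩
  have hnhds : Icc t₀ (x + 1) ∈ 𝓝[Ici t₀] x := by
    rw [← Ici_inter_Iic]
    exact inter_mem_nhdsWithin _ (Iic_mem_nhds (by linarith))
  rw [hg (x + 1) ⟨hx, by linarith⟩]
  exact ((hh (x + 1) x ⟨hx, by linarith⟩).mono_of_mem_nhdsWithin hnhds).congr_of_eventuallyEq
    (eventuallyEq_of_mem hnhds (hg (x + 1))) (hg (x + 1) ⟨hx, by linarith⟩)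

theorem recInt_of_strict_subsolution {F w W : ℝ → ℝ} {t₀ : ℝ} (hF : ContinuousOn F (Ici t₀))
    (hw0 : ∀ x, t₀ ≤ x → 0 ≤ w x) (hw : ∀ x, t₀ ≤ x → HasDerivWithinAt w (W x) (Ici t₀) x)
    (hsub : ∀ x, t₀ ≤ x → W x < -(w x ^ 2 + F x)) : RecInt t₀ F := by
  have hloc : ∀ T, ∃ h : ℝ → ℝ, h t₀ = w t₀ ∧
      ∀ x ∈ Icc t₀ T, w x ≤ h x ∧ HasDerivWithinAt h (-(h x ^ 2 + F x)) (Icc t₀ T) x := by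
    intro T
    rcases le_or_gt t₀ T with hT | hT
    · exact exists_riccati_solution_Icc_ge_of_strict_subsolution hT (hF.mono Icc_subset_Ici_self)
        (fun x hx => hw0 x hx.1)
        (fun x hx => (hw x hx.1).continuousWithinAt.mono Icc_subset_Ici_self)
        (fun x hx => (hw x hx.1).mono (Ici_subset_Ici.2 hx.1)) (fun x hx => hsub x hx.1)
    · exact ⟨w, rfl, by simp [Icc_eq_empty_of_lt hT]⟩
  choose h hh₀ hh using hloc
  obtain ⟨g, hgh, hg⟩ := exists_forall_hasDerivWithinAt_Ici_of_forall_Icc_s19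
    (v := fun x y => -(y ^ 2 + F x)) (fun T x hx => (hh T x hx).2) fun T T' =>
      riccati_eqOn_Icc (fun x hx => ((hh T x ⟨hx.1, hx.2.trans (min_le_left _ _)⟩).2.mono
          (Icc_subset_Icc_right (min_le_left _ _))))
        (fun x hx => ((hh T' x ⟨hx.1, hx.2.trans (min_le_right _ _)⟩).2.mono
          (Icc_subset_Icc_right (min_le_right _ _))))
        ((hh₀ T).trans (hh₀ T').symm)
  refine ⟨t₀, le_rfl, g, fun x hx => ?_, hg⟩
  rw [hgh x ⟨hx, le_rfl⟩]
  exact (hw0 x hx).trans (hh x x ⟨hx, le_rfl⟩).1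

theorem hasDerivAt_const_div_rpow (c p : ℝ) {x : ℝ} (hx : 0 < x) :
    HasDerivAt (fun y : ℝ => c / y ^ p) (-(c * p / x ^ (p + 1))) x := by
  have h := ((Real.hasDerivAt_rpow_const (p := p) (Or.inl hx.ne')).inv
    (Real.rpow_pos_of_pos hx p).ne').const_mul c
  refine (h.congr_of_eventuallyEq (.of_eq (funext fun y => div_eq_mul_inv c _))).congr_deriv ?_
  rw [Real.rpow_add hx, Real.rpow_one, Real.rpow_sub_one hx.ne']
  field_simp

theorem sq_add_div_rpow_add_one_div_rpow_lt {G C ε x : ℝ} (hx : 0 < x)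
    (h : 2 * C * (x * G) + C ^ 2 / x ^ ε + 1 < C * (1 + ε)) :
    (G + C / x ^ ((1 : ℝ) + ε)) ^ 2 + 1 / x ^ ((2 : ℝ) + ε) <
      G ^ 2 + C * (1 + ε) / x ^ ((2 : ℝ) + ε) := by
  have hxε := Real.rpow_pos_of_pos hx ε
  have h1 : x ^ ((1 : ℝ) + ε) = x * x ^ ε := by rw [Real.rpow_add hx, Real.rpow_one]
  have h2 : x ^ ((2 : ℝ) + ε) = x ^ 2 * x ^ ε := by
    rw [Real.rpow_add hx, Real.rpow_two]
  have hid : (G + C / x ^ ((1 : ℝ) + ε)) ^ 2 + 1 / x ^ ((2 : ℝ) + ε) =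
      G ^ 2 + (2 * C * (x * G) + C ^ 2 / x ^ ε + 1) / x ^ ((2 : ℝ) + ε) := by
    rw [h1, h2]; field_simp; ring
  rw [hid, add_lt_add_iff_left]
  exact div_lt_div_of_pos_right h (by positivity)

theorem eventually_bracket_lt {g₁ : ℝ → ℝ} {ε C : ℝ} (hε : 0 < ε) (hC : 1 / ε < C)
    (hlim : Tendsto (fun x : ℝ => x * g₁ x) atTop (𝓝 (1 / 2))) :
    ∀ᶠ x in atTop, 2 * C * (x * g₁ x) + C ^ 2 / x ^ ε + 1 < C * (1 + ε) := by
  have hCε : C + 1 < C * (1 + ε) := by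
    have := (div_lt_iff₀ hε).1 hC
    linarith
  have h := ((hlim.const_mul (2 * C)).add
    ((tendsto_rpow_atTop hε).inv_tendsto_atTop.const_mul (C ^ 2))).add_const 1
  rw [show 2 * C * (1 / 2) + C ^ 2 * 0 + 1 = C + 1 by ring] at h
  simpa only [div_eq_mul_inv, Pi.inv_apply] using h.eventually_lt_const hCε

/-- Ignorability of `x ↦ x^{-(2+ε)}`: perturbing a recursive antiderivative `g₁` of `f₁`
(with `x g₁(x) → 1/2`) by `C/x^{1+ε}` (where `C > 1/ε`) gives a solution of the
differential inequality for `f₁ + x^{-(2+ε)}`, so the latter is recursively integrable. -/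
theorem ignorable_perturbation (ε C t₁ : ℝ) (hε : 0 < ε) (hC : 1 / ε < C)
    (f₁ g₁ : ℝ → ℝ) (hf₁ : ContinuousOn f₁ (Set.Ici t₁))
    (hg₁0 : ∀ x, t₁ ≤ x → 0 ≤ g₁ x)
    (hg₁ : ∀ x, t₁ ≤ x → HasDerivWithinAt g₁ (-(g₁ x ^ 2 + f₁ x)) (Set.Ici t₁) x)
    (hlim : Filter.Tendsto (fun x : ℝ => x * g₁ x) Filter.atTop (nhds (1 / 2))) :
    (∃ t₂ : ℝ, t₁ ≤ t₂ ∧ ∀ x, t₂ ≤ x → ∃ g' : ℝ,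
      HasDerivWithinAt (fun y : ℝ => g₁ y + C / y ^ ((1 : ℝ) + ε)) g' (Set.Ici t₂) x ∧
      (g₁ x + C / x ^ ((1 : ℝ) + ε)) ^ 2 + f₁ x + 1 / x ^ ((2 : ℝ) + ε) ≤ -g') ∧
    RecInt t₁ (fun x => f₁ x + 1 / x ^ ((2 : ℝ) + ε)) := by
  have hC0 : 0 < C := (one_div_pos.2 hε).trans hC
  obtain ⟨N, hN⟩ := eventually_atTop.1 (eventually_bracket_lt hε hC hlim)
  set t₂ := max N (max t₁ 1)
  have ht₁₂ : t₁ ≤ t₂ := (le_max_left _ _).trans (le_max_right _ _)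
  have hpos : ∀ x, t₂ ≤ x → 0 < x := fun x hx =>
    one_pos.trans_le (((le_max_right _ _).trans (le_max_right _ _)).trans hx)
  set D : ℝ → ℝ := fun x => -(g₁ x ^ 2 + f₁ x) - C * (1 + ε) / x ^ ((2 : ℝ) + ε)
  have hderiv : ∀ x, t₂ ≤ x →
      HasDerivWithinAt (fun y : ℝ => g₁ y + C / y ^ ((1 : ℝ) + ε)) (D x) (Ici t₂) x := by
    intro x hx
    have h := (hasDerivAt_const_div_rpow C (1 + ε) (hpos x hx)).hasDerivWithinAt (s := Ici t₂)
    rw [show (1 : ℝ) + ε + 1 = 2 + ε by ring] at h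
    exact ((hg₁ x (ht₁₂.trans hx)).mono (Ici_subset_Ici.2 ht₁₂)).add h
  have hsub : ∀ x, t₂ ≤ x →
      D x < -((g₁ x + C / x ^ ((1 : ℝ) + ε)) ^ 2 + (f₁ x + 1 / x ^ ((2 : ℝ) + ε))) := by
    intro x hx
    have := sq_add_div_rpow_add_one_div_rpow_lt (hpos x hx) (hN x ((le_max_left _ _).trans hx))
    simp only [D]
    linarith
  refine ⟨⟨t₂, ht₁₂, fun x hx => ⟨D x, hderiv x hx, by linarith [hsub x hx]⟩⟩, ?_⟩
  have hF : ContinuousOn (fun x => f₁ x + 1 / x ^ ((2 : ℝ) + ε)) (Ici t₂) :=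
    (hf₁.mono (Ici_subset_Ici.2 ht₁₂)).add <| continuousOn_const.div
      (continuousOn_id.rpow_const fun x hx => Or.inl (hpos x hx).ne')
      fun x hx => (Real.rpow_pos_of_pos (hpos x hx) _).ne'
  obtain ⟨t₃, ht₂₃, g, hg⟩ := recInt_of_strict_subsolution hF
    (fun x hx => add_nonneg (hg₁0 x (ht₁₂.trans hx))
      (div_pos hC0 (Real.rpow_pos_of_pos (hpos x hx) _)).le) hderiv hsub
  exact ⟨t₃, ht₁₂.trans ht₂₃, g, hg⟩
end
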